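/- arXiv:2412.06023 — 10 statements merged into one kernel-verified Lean document; each statement's English description precedes it below -/
import Mathlib

section
/- Let G be a group and R a subset of G \ {1} consisting of elements of order two such that G is the free product of the cyclic subgroups ⟨r⟩ for r ∈ R. Then every element of order two in G is conjugate to some element of R. -/
open Monoid Monoid.CoprodI

section Aux

variable {ι : Type*} {H : ι → Type*} [∀ i, Group (H i)] [DecidableEq ι]
  [∀ i, DecidableEq (H i)]

private lemma word_prod_injective' : Function.Injective (Word.prod : Word H → CoprodI H) :=
  fun w₁ w₂ h => Word.equiv.symm.injective (h : Word.equiv.symm w₁ = Word.equiv.symm w₂)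

private lemma neword_prod_ne_one' {i j : ι} (w : NeWord H i j) : w.prod ≠ 1 := by
  intro h
  have h2 : Word.prod w.toWord = Word.prod Word.empty := by
    rw [Word.prod_empty]; exact h
  have h3 := word_prod_injective' h2
  exact w.toList_ne_nil (congrArg Word.toList h3)

private lemma conj_of_involution' :
    ∀ (n : ℕ) (x : CoprodI H), (Word.equiv x).toList.length = n →
      x ≠ 1 → x * x = 1 → ∃ (i : ι) (m : H i), m ≠ 1 ∧ IsConj (of m) x := by
  intro n
  induction n using Nat.strong_induction_on with
  | _ n ih =>
    intro x hlen hx hx2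
    have hxw : Word.prod (Word.equiv x) = x := Word.equiv.symm_apply_apply x
    by_cases hemp : Word.equiv x = Word.empty
    · exact absurd (by rw [← hxw, hemp, Word.prod_empty]) hx
    obtain ⟨i, j, w', hw'⟩ := NeWord.of_word _ hemp
    have hlist : (Word.equiv x).toList = w'.toList := by rw [← hw']; rfl
    by_cases hij : i = j
    case neg =>
      refine absurd ?_ (neword_prod_ne_one' (NeWord.append w' (Ne.symm hij) w'))
      rw [NeWord.append_prod]
      have hprod : w'.prod = x := by rw [NeWord.prod, hw']; exact hxw
      rw [hprod, hx2]
    subst hij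
    -- decompose the list
    have hhead := w'.toList_head?
    have hlast := w'.toList_getLast?
    rcases hcons : w'.toList with _ | ⟨a, L⟩
    · exact absurd hcons w'.toList_ne_nil
    rw [hcons] at hhead hlast
    have ha : a = ⟨i, w'.head⟩ := by simpa using hhead
    subst ha
    set h := w'.head with hh
    have hne1 : ∀ p ∈ w'.toList, p.2 ≠ 1 := w'.toWord.ne_one
    have hch : w'.toList.Chain' fun p q => p.1 ≠ q.1 := w'.toWord.chain_ne
    rw [hcons] at hne1 hch
    rcases L.eq_nil_or_concat with rfl | ⟨L'', b, hLb⟩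
    · -- singleton word : x = of h
      have hx_eq : x = of h := by
        rw [← hxw, Word.prod, hlist, hcons]
        simp
      exact ⟨i, h, hne1 ⟨i, h⟩ (List.mem_singleton_self _), by rw [hx_eq]⟩
    · rw [List.concat_eq_append] at hLb
      subst hLb
      have hb : b = ⟨i, w'.last⟩ := by
        rw [← List.cons_append, List.getLast?_concat] at hlast
        simpa using hlast
      subst hb
      set l := w'.last with hl
      -- facts about L''
      have hchL : L''.Chain' fun p q => p.1 ≠ q.1 := by
        have := (List.isChain_cons.mp hch).2
        rw [List.isChain_append] at this
        exact this.1
      have hlast_ne : ∀ p ∈ L''.getLast?, p.1 ≠ i := by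
        have := (List.isChain_cons.mp hch).2
        rw [List.isChain_append] at this
        intro p hp
        exact this.2.2 p hp ⟨i, l⟩ rfl
      have hneL : ∀ p ∈ L'', p.2 ≠ 1 := fun p hp => hne1 p (by simp [hp])
      -- product decomposition
      have hxprod : x = of h * ((L''.map fun p => of p.2).prod * of l) := by
        rw [← hxw, Word.prod, hlist, hcons]
        simp [mul_assoc]
      set y := (of h)⁻¹ * x * of h with hy
      have hxy : x = of h * y * (of h)⁻¹ := by rw [hy]; group
      have hyne : y ≠ 1 := fun h1 => hx (by rw [hxy, h1]; group)
      have hy2 : y * y = 1 := by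
        have h5 : y * y = (of h)⁻¹ * (x * x) * of h := by rw [hy]; group
        rw [h5, hx2, mul_one, inv_mul_cancel]
      have hconjyx : IsConj y x := isConj_iff.mpr ⟨of h, by rw [← hxy]⟩
      have hyprod : y = (L''.map fun p => of p.2).prod * of (l * h) := by
        rw [hy, hxprod, map_mul]
        group
      have hlen' : L''.length + 2 = n := by
        rw [hlist, hcons] at hlen
        simpa [add_comm, add_assoc, add_left_comm] using hlen
      by_cases hlh : l * h = 1
      · -- cancellation: shorter by 2
        let wmid : Word H := ⟨L'', hneL, hchL⟩
        have hyw : y = Word.prod wmid := by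
          rw [hyprod, hlh, map_one, mul_one]
          simp [Word.prod, wmid]
        have heq : Word.equiv y = wmid := by
          rw [hyw]; exact Word.equiv.apply_symm_apply wmid
        have hlt : (Word.equiv y).toList.length < n := by
          rw [heq]
          show L''.length < n
          omega
        obtain ⟨k, m, hm1, hconj⟩ := ih _ hlt y rfl hyne hy2
        exact ⟨k, m, hm1, hconj.trans hconjyx⟩
      · -- merge the ends: shorter by 1
        let w2 : Word H := ⟨L'' ++ [⟨i, l * h⟩],
          by
            intro p hp
            rcases List.mem_append.mp hp with hp | hp
            · exact hneL p hp
            · simp only [List.mem_singleton] at hp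
              subst hp
              exact hlh,
          by
            rw [List.isChain_append]
            refine ⟨hchL, List.isChain_singleton _, ?_⟩
            intro p hp q hq
            simp only [List.head?_cons, Option.mem_some_iff] at hq
            subst hq
            exact hlast_ne p hp⟩
        have hyw : y = Word.prod w2 := by
          rw [hyprod]
          simp [Word.prod, w2]
        have heq : Word.equiv y = w2 := by
          rw [hyw]; exact Word.equiv.apply_symm_apply w2
        have hlt : (Word.equiv y).toList.length < n := by
          rw [heq]
          simp only [w2, List.length_append, List.length_singleton]
          omega
        obtain ⟨k, m, hm1, hconj⟩ := ih _ hlt y rfl hyne hy2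
        exact ⟨k, m, hm1, hconj.trans hconjyx⟩

end Aux

/-- If `G` is the internal free product of the order-two cyclic subgroups generated by the
elements of `R ⊆ G \ {1}`, then every element of order two in `G` is conjugate to some
element of `R`. -/
theorem stmt_0 {G : Type*} [Group G] (R : Set G)
    (hR : ∀ r ∈ R, r ≠ 1 ∧ r ^ 2 = 1)
    (hfree : Function.Bijective
      (Monoid.CoprodI.lift (fun r : R => (Subgroup.zpowers (r : G)).subtype)))
    (g : G) (hg : g ≠ 1) (hg2 : g ^ 2 = 1) :
    ∃ r ∈ R, IsConj r g := by
  classical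
  let e : CoprodI (fun r : R => ↥(Subgroup.zpowers (r : G))) ≃* G :=
    MulEquiv.ofBijective _ hfree
  set x := e.symm g with hxdef
  have hx1 : x ≠ 1 := by
    intro h0
    apply hg
    have := congrArg e h0
    simpa [hxdef] using this
  have hx2 : x * x = 1 := by
    apply e.injective
    rw [map_mul, map_one, hxdef, MulEquiv.apply_symm_apply, ← sq, hg2]
  obtain ⟨r, m, hm1, hconj⟩ := conj_of_involution' _ x rfl hx1 hx2
  have hconjG : IsConj (e (of m)) g := by
    have := e.toMonoidHom.map_isConj hconj
    simpa [hxdef] using this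
  have he_of : e (of m) = (m : G) := by
    show Monoid.CoprodI.lift (fun r : R => (Subgroup.zpowers (r : G)).subtype) (of m) = _
    rw [Monoid.CoprodI.lift_of]
    rfl
  obtain ⟨hr1, hr2⟩ := hR r r.2
  have hr2' : ((r : G)) ^ (2 : ℤ) = 1 := by
    rw [show ((2 : ℤ)) = ((2 : ℕ) : ℤ) by norm_num, zpow_natCast, hr2]
  have hm_eq : (m : G) = (r : G) := by
    obtain ⟨k, hk⟩ := Subgroup.mem_zpowers_iff.mp m.2
    rcases Int.even_or_odd k with ⟨j, hj⟩ | ⟨j, hj⟩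
    · exfalso
      apply hm1
      have : (m : G) = 1 := by
        rw [← hk, hj, show j + j = 2 * j by ring, zpow_mul, hr2', one_zpow]
      exact Subtype.ext this
    · rw [← hk, hj, zpow_add, zpow_mul, hr2', one_zpow, one_mul, zpow_one]
  exact ⟨(r : G), r.2, by rw [← hm_eq, ← he_of]; exact hconjG⟩
end

section
/- Let G be a group with R ⊆ G \ {1} a set of involutions such that G = ∗_{r∈R} ⟨r⟩. Let S ⊆ G \ {1} be a set of elements such that: (a) S generates G; (b) every s ∈ S satisfies s² = 1; (c) S is closed under conjugation by elements of G. Then R ⊆ S, R is a set of orbit representatives for the conjugation action of G on S, and S equals the set of all elements of order two in G. -/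
/-!
Every involution of a free product is conjugate into a factor: writing it as a reduced word,
its first and last letters lie in the same factor (otherwise its square is again reduced and
nontrivial), and conjugating by the first letter shortens the word. Hence every element of `S`
is conjugate to some `r ∈ R`, and that `r` lies in `S`. On the other hand the retraction of
`G` onto the factor `⟨r⟩` is trivial on every other element of `R`, so `r` is not in the
normal closure of `R \ {r}`. This forces distinct elements of `R` to be non-conjugate, and
it forces `R ⊆ S`, since otherwise the generating set `S` would lie in that normal closure.
-/

theorem List.eq_singleton_or_eq_cons_append_singleton {α : Type*} {l : List α} {a b : α}
    (ha : l.head? = some a) (hb : l.getLast? = some b) :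
    l = [a] ∨ ∃ m, l = a :: (m ++ [b]) := by
  rcases l with _ | ⟨c, t⟩
  · simp at ha
  obtain rfl : c = a := by simpa using ha
  rcases List.eq_nil_or_concat t with rfl | ⟨m, d, rfl⟩
  · exact .inl rfl
  · rw [List.concat_eq_append, ← List.cons_append, List.getLast?_concat] at hb
    obtain rfl := Option.some.inj hb
    exact .inr ⟨m, by rw [List.concat_eq_append]⟩

namespace Monoid.CoprodI

namespace Word

variable {ι : Type*} {M : ι → Type*} [∀ i, Monoid (M i)] [∀ i, DecidableEq (M i)]

theorem length_rcons_le {i : ι} (p : Pair M i) :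
    (rcons p).toList.length ≤ p.tail.toList.length + 1 := by
  unfold rcons; split <;> simp

theorem length_tail_le_rcons {i : ι} (p : Pair M i) :
    p.tail.toList.length ≤ (rcons p).toList.length := by
  unfold rcons; split <;> simp

variable [DecidableEq ι]

theorem length_of_smul_le {i : ι} (m : M i) (w : Word M) :
    (of m • w).toList.length ≤ w.toList.length + 1 := by
  rw [of_smul_def]
  refine (length_rcons_le _).trans (Nat.add_le_add_right ?_ 1)
  simpa only [← equivPair_symm, Equiv.symm_apply_apply] using length_tail_le_rcons (equivPair i w)

theorem length_equiv_prod_le (l : List (Σ i, M i)) :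
    (equiv (l.map fun p => of p.2).prod).toList.length ≤ l.length := by
  induction l with
  | nil => rfl
  | cons p l ih =>
    rw [List.map_cons, List.prod_cons, List.length_cons]
    change ((of p.2 * _) • empty).toList.length ≤ _
    rw [mul_smul]
    exact (length_of_smul_le _ _).trans (Nat.add_le_add_right ih 1)

end Word

namespace NeWord

variable {ι : Type*} {M : ι → Type*} [∀ i, Monoid (M i)]

theorem prod_ne_one {i j : ι} (w : NeWord M i j) : w.prod ≠ 1 := by
  classical
  intro h
  have : w.toWord = Word.empty := Word.equiv.symm.injective h
  exact w.toList_ne_nil (congrArg Word.toList this)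

theorem prod_mul_self_ne_one {i j : ι} (w : NeWord M i j) (hij : j ≠ i) :
    w.prod * w.prod ≠ 1 := by
  rw [← append_prod (hne := hij)]
  exact prod_ne_one _

end NeWord

theorem exists_isConj_of_of_sq_eq_one {ι : Type*} {G : ι → Type*} [∀ i, Group (G i)]
    {x : CoprodI G} (hx : x ≠ 1) (hx2 : x ^ 2 = 1) :
    ∃ i, ∃ g : G i, g ≠ 1 ∧ IsConj (of g) x := by
  classical
  induction hn : (Word.equiv x).toList.length using Nat.strong_induction_on generalizing x with
  | _ n ih =>
  obtain ⟨i, j, w, hw⟩ := NeWord.of_word (Word.equiv x) fun h =>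
    hx (Word.equiv.eq_symm_apply.mpr h)
  have hxw : x = w.prod := by rw [← Word.equiv.symm_apply_apply x, ← hw]; rfl
  have hprod : w.prod = (w.toList.map fun p => of p.2).prod := rfl
  obtain rfl | hji := eq_or_ne j i
  swap
  · exact absurd (by rwa [← sq, ← hxw]) (w.prod_mul_self_ne_one hji)
  rcases List.eq_singleton_or_eq_cons_append_singleton w.toList_head? w.toList_getLast?
    with hl | ⟨l, hl⟩
  · refine ⟨_, w.head, w.toWord.ne_one ⟨_, w.head⟩ (by simp [NeWord.toWord, hl]), ?_⟩
    rw [hxw, hprod, hl, List.map_singleton, List.prod_singleton]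
  · -- conjugating by the first letter merges it into the last one
    set y := (of w.head)⁻¹ * x * of w.head with hy
    have hyl : y = ((l ++ [(⟨_, w.last * w.head⟩ : Σ i, G i)]).map fun p => of p.2).prod := by
      simp [hy, hxw, hprod, hl, mul_assoc]
    have hxy : IsConj x y := isConj_iff.mpr ⟨(of w.head)⁻¹, by rw [hy, inv_inv]⟩
    have hlen : (Word.equiv y).toList.length < n := calc
      _ ≤ (l ++ [(⟨_, w.last * w.head⟩ : Σ i, G i)]).length := hyl ▸ Word.length_equiv_prod_le _
      _ < w.toList.length := by simp [hl]
      _ = n := by rw [← hn, ← hw]; rfl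
    obtain ⟨k, g, hg, hgy⟩ := ih _ hlen (fun h => hx (isConj_one_left.mp (h ▸ hxy)))
      (isConj_one_right.mp (hx2 ▸ hxy.pow 2)) rfl
    exact ⟨k, g, hg, hgy.trans hxy.symm⟩

end Monoid.CoprodI

open Monoid Subgroup Group

theorem eq_of_mem_zpowers_of_sq_eq_one {G : Type*} [Group G] {r x : G} (hr : r ^ 2 = 1)
    (hx : x ∈ zpowers r) (hx1 : x ≠ 1) : x = r := by
  obtain ⟨k, rfl⟩ := mem_zpowers_iff.mp hx
  rw [zpow_eq_zpow_emod' k hr] at hx1 ⊢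
  rcases Int.emod_two_eq_zero_or_one k with h | h <;> simp_all

section InternalFreeProduct

variable {G : Type*} [Group G] {ι : Type*} {H : ι → Subgroup G}

theorem exists_isConj_mem_of_sq_eq_one
    (hfree : Function.Bijective (CoprodI.lift fun i => (H i).subtype))
    {g : G} (hg : g ≠ 1) (hg2 : g ^ 2 = 1) : ∃ i, ∃ h ∈ H i, h ≠ 1 ∧ IsConj h g := by
  set e := MulEquiv.ofBijective _ hfree
  obtain ⟨i, h, hh, hconj⟩ := CoprodI.exists_isConj_of_of_sq_eq_one (x := e.symm g)
    (by simpa using hg) (by rw [← map_pow, hg2, map_one])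
  refine ⟨i, h, h.2, by simpa using hh, ?_⟩
  simpa [e] using e.toMonoidHom.map_isConj hconj

theorem notMem_normalClosure_of_bijective_lift
    (hfree : Function.Bijective (CoprodI.lift fun i => (H i).subtype))
    {i : ι} {h : G} (hh : h ∈ H i) (h1 : h ≠ 1) :
    h ∉ normalClosure {g | ∃ j ≠ i, g ∈ H j} := by
  classical
  set e := MulEquiv.ofBijective _ hfree
  have he : ∀ {j} {g : G} (hg : g ∈ H j), e.symm g = CoprodI.of (M := fun k => H k) ⟨g, hg⟩ :=
    fun hg => e.symm_apply_eq.mpr (by simp [e])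
  -- the retraction of the free product onto its factor `H i`
  set ρ : ∀ j, H j →* H i := Pi.mulSingle i (MonoidHom.id (H i)) with hρ
  let π : G →* H i := (CoprodI.lift ρ).comp e.symm.toMonoidHom
  have hπ : ∀ {j} {g : G} (hg : g ∈ H j), π g = ρ j ⟨g, hg⟩ := fun hg => by
    simp only [π, MonoidHom.comp_apply, MulEquiv.coe_toMonoidHom, he hg, CoprodI.lift_of]
  have hker : normalClosure {g | ∃ j ≠ i, g ∈ H j} ≤ π.ker :=
    normalClosure_le_normal fun g ⟨j, hj, hg⟩ => by
      rw [SetLike.mem_coe, MonoidHom.mem_ker, hπ hg, hρ, Pi.mulSingle_eq_of_ne hj,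
        MonoidHom.one_apply]
  intro hmem
  have := hker hmem
  rw [MonoidHom.mem_ker, hπ hh, hρ, Pi.mulSingle_eq_same, MonoidHom.id_apply] at this
  exact h1 (congrArg Subtype.val this)

end InternalFreeProduct

section ConjugacyRepresentatives

variable {G : Type*} [Group G] {R S : Set G}

theorem eq_of_isConj_of_notMem_normalClosure (hsep : ∀ r ∈ R, r ∉ normalClosure (R \ {r}))
    {r r' : G} (hr : r ∈ R) (hr' : r' ∈ R) (h : IsConj r r') : r = r' := by
  by_contra hne
  exact hsep r hr <| conjugatesOfSet_subset_normalClosure <|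
    mem_conjugatesOfSet_iff.mpr ⟨r', ⟨hr', Ne.symm hne⟩, h.symm⟩

theorem subset_of_forall_isConj_of_closure_eq_top (hsep : ∀ r ∈ R, r ∉ normalClosure (R \ {r}))
    (hSR : ∀ s ∈ S, ∃ r ∈ R, IsConj r s) (hSconj : ∀ s ∈ S, ∀ t, IsConj s t → t ∈ S)
    (hSgen : closure S = ⊤) : R ⊆ S := by
  intro r₀ hr₀
  by_contra hr₀S
  have hle : closure S ≤ normalClosure (R \ {r₀}) := closure_le _ |>.mpr fun s hs => by
    obtain ⟨r, hr, hrs⟩ := hSR s hs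
    have hrS : r ∈ S := hSconj s hs r hrs.symm
    exact conjugatesOfSet_subset_normalClosure <|
      mem_conjugatesOfSet_iff.mpr ⟨r, ⟨hr, fun h => hr₀S (h ▸ hrS)⟩, hrs⟩
  rw [hSgen, top_le_iff] at hle
  exact hsep r₀ hr₀ (hle ▸ mem_top r₀)

end ConjugacyRepresentatives

section FreeProductOfInvolutions

variable {G : Type*} [Group G] {R : Set G}

theorem exists_isConj_of_bijective_lift_zpowers (hR : ∀ r ∈ R, r ^ 2 = 1)
    (hfree : Function.Bijective (CoprodI.lift fun r : R => (zpowers (r : G)).subtype))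
    {g : G} (hg : g ≠ 1) (hg2 : g ^ 2 = 1) : ∃ r ∈ R, IsConj r g := by
  obtain ⟨r, h, hh, h1, hhg⟩ := exists_isConj_mem_of_sq_eq_one hfree hg hg2
  exact ⟨r, r.2, eq_of_mem_zpowers_of_sq_eq_one (hR r r.2) hh h1 ▸ hhg⟩

theorem notMem_normalClosure_diff_of_bijective_lift_zpowers (hR : ∀ r ∈ R, r ≠ 1)
    (hfree : Function.Bijective (CoprodI.lift fun r : R => (zpowers (r : G)).subtype))
    {r : G} (hr : r ∈ R) : r ∉ normalClosure (R \ {r}) := by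
  have hsub : R \ {r} ⊆ {g | ∃ j ≠ (⟨r, hr⟩ : R), g ∈ zpowers (j : G)} :=
    fun r' ⟨hr', hne⟩ => ⟨⟨r', hr'⟩, fun h => hne (congrArg Subtype.val h), mem_zpowers r'⟩
  exact fun h => notMem_normalClosure_of_bijective_lift hfree (mem_zpowers r) (hR r hr)
    (normalClosure_mono hsub h)

end FreeProductOfInvolutions

/-- Let `G` be the internal free product of the order-two cyclic subgroups generated by a set
`R ⊆ G \ {1}` of involutions, and let `S ⊆ G \ {1}` be a conjugation-closed generating set of
involutions.  Then `R ⊆ S`, `R` is a set of orbit representatives for the conjugation action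
of `G` on `S`, and `S` is the set of all order-two elements of `G`. -/
theorem stmt_1 {G : Type*} [Group G] (R S : Set G)
    (hR : ∀ r ∈ R, r ≠ 1 ∧ r ^ 2 = 1)
    (hfree : Function.Bijective
      (Monoid.CoprodI.lift (fun r : R => (Subgroup.zpowers (r : G)).subtype)))
    (hS1 : ∀ s ∈ S, s ≠ 1)
    (hSgen : Subgroup.closure S = ⊤)
    (hSsq : ∀ s ∈ S, s ^ 2 = 1)
    (hSconj : ∀ s ∈ S, ∀ g : G, g * s * g⁻¹ ∈ S) :
    R ⊆ S ∧ (∀ s ∈ S, ∃! r, r ∈ R ∧ IsConj r s) ∧ S = {g : G | g ≠ 1 ∧ g ^ 2 = 1} := by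
  have hconjR : ∀ g : G, g ≠ 1 → g ^ 2 = 1 → ∃ r ∈ R, IsConj r g := fun _ =>
    exists_isConj_of_bijective_lift_zpowers (fun r hr => (hR r hr).2) hfree
  have hsep : ∀ r ∈ R, r ∉ normalClosure (R \ {r}) := fun _ =>
    notMem_normalClosure_diff_of_bijective_lift_zpowers (fun r hr => (hR r hr).1) hfree
  have hSconj' : ∀ s ∈ S, ∀ t, IsConj s t → t ∈ S := fun s hs t hst => by
    obtain ⟨c, rfl⟩ := isConj_iff.mp hst
    exact hSconj s hs c
  have hSR : ∀ s ∈ S, ∃ r ∈ R, IsConj r s := fun s hs => hconjR s (hS1 s hs) (hSsq s hs)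
  have hRS : R ⊆ S := subset_of_forall_isConj_of_closure_eq_top hsep hSR hSconj' hSgen
  refine ⟨hRS, fun s hs => ?_, ?_⟩
  · obtain ⟨r, hr, hrs⟩ := hSR s hs
    exact ⟨r, ⟨hr, hrs⟩, fun r' ⟨hr', hr's⟩ =>
      (eq_of_isConj_of_notMem_normalClosure hsep hr hr' (hrs.trans hr's.symm)).symm⟩
  · ext g
    refine ⟨fun hg => ⟨hS1 g hg, hSsq g hg⟩, fun ⟨hg1, hg2⟩ => ?_⟩
    obtain ⟨r, hr, hrg⟩ := hconjR g hg1 hg2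
    exact hSconj' r (hRS hr) g hrg
end

section
/- Under the Hurwitz action of B_n on (F_m)^n, the orbit of a tuple t = (t_1, …, t_n) with each t_i a free generator x_j is exactly the set of tuples lying in ⋃_{τ∈S_n} C(t_{τ(1)}) × ⋯ × C(t_{τ(n)}) whose product equals t_1 ⋯ t_n, where C(x) denotes the conjugacy class of x in F_m. -/
/-!
Both conditions on the right are invariant under the Hurwitz moves, which gives one inclusion.
Conversely, start from `g` and apply moves that shorten the total word length of the tuple for
as long as possible. Once no move shortens it, write each entry as `uᵢ xᵢ uᵢ⁻¹` with the reduced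
word of `uᵢ` not ending in `xᵢ^{±1}`. Minimality rules out cancellation between neighbouring
entries, so the reduced word of the product is `u₁ x₁ (u₁⁻¹u₂) x₂ ⋯ (uₙ₋₁⁻¹uₙ) xₙ uₙ⁻¹`, read
literally. This product is `t₁ ⋯ tₙ`, a positive word, which forces every `uᵢ = 1`: the tuple
consists of generators and is therefore determined by its product, so it is `t`.
-/

/-- The braid relators for the braid group on `k + 1` strands. -/
def braidRels (k : ℕ) : Set (FreeGroup (Fin k)) :=
  {w | (∃ i j : Fin k, (i : ℕ) + 2 ≤ (j : ℕ) ∧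
          w = FreeGroup.of i * FreeGroup.of j * (FreeGroup.of i)⁻¹ * (FreeGroup.of j)⁻¹) ∨
       (∃ i j : Fin k, (j : ℕ) = (i : ℕ) + 1 ∧
          w = FreeGroup.of i * FreeGroup.of j * FreeGroup.of i *
                (FreeGroup.of j * FreeGroup.of i * FreeGroup.of j)⁻¹)}

/-- The braid group `B_{k+1}` on `k + 1` strands. -/
abbrev BraidGroup (k : ℕ) := PresentedGroup (braidRels k)

namespace FreeGroup

variable {α : Type*} [DecidableEq α] {g h w : FreeGroup α}

theorem toWord_mul_of_isReduced (hgh : IsReduced (g.toWord ++ h.toWord)) :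
    (g * h).toWord = g.toWord ++ h.toWord := by
  rw [toWord_mul, hgh.reduce_eq]

def IsPositive (w : FreeGroup α) : Prop := ∀ a ∈ w.toWord, a.2 = true

omit [DecidableEq α] in
theorem isReduced_of_forall_snd_eq_true {L : List (α × Bool)} (h : ∀ a ∈ L, a.2 = true) :
    IsReduced L :=
  List.Pairwise.isChain <| List.pairwise_of_forall_mem_list (r := fun a b => a.1 = b.1 → a.2 = b.2)
    fun a ha b hb _ => (h a ha).trans (h b hb).symm

theorem IsPositive.toWord_mul (hg : IsPositive g) (hh : IsPositive h) :
    (g * h).toWord = g.toWord ++ h.toWord :=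
  toWord_mul_of_isReduced <| isReduced_of_forall_snd_eq_true fun a ha => by
    rcases List.mem_append.1 ha with ha | ha
    exacts [hg a ha, hh a ha]

theorem IsPositive.mul (hg : IsPositive g) (hh : IsPositive h) : IsPositive (g * h) := by
  intro a ha
  rw [hg.toWord_mul hh] at ha
  rcases List.mem_append.1 ha with ha | ha
  exacts [hg a ha, hh a ha]

theorem IsPositive.eq_one_of_inv (hw : IsPositive w) (hw' : IsPositive w⁻¹) : w = 1 := by
  rw [← toWord_eq_nil_iff, List.eq_nil_iff_forall_not_mem]
  intro a ha
  have := hw' (a.1, !a.2) <| by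
    rw [toWord_inv, invRev]
    exact List.mem_reverse.2 (List.mem_map_of_mem ha)
  simp [hw a ha] at this

theorem toWord_prod_map_of (xs : List α) :
    (xs.map of).prod.toWord = xs.map fun x => (x, true) := by
  induction xs with
  | nil => rfl
  | cons x xs ih =>
    have hx : IsPositive (of x) := by simp [IsPositive, toWord_of]
    rw [List.map_cons, List.prod_cons, hx.toWord_mul (by simp [IsPositive, ih]), ih, toWord_of]
    rfl

theorem isPositive_prod_map_of (xs : List α) : IsPositive (xs.map of).prod := by
  simp [IsPositive, toWord_prod_map_of]

theorem prod_map_of_injective : Function.Injective fun xs : List α => (xs.map of).prod := by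
  intro xs ys h
  have := congrArg toWord h
  simp only [toWord_prod_map_of] at this
  exact List.map_injective_iff.2 (fun a b hab => congrArg Prod.fst hab) this

/-- Then `u * of x * u⁻¹` is reduced as written (`toWord_conj_of`), and `u` is the shortest
conjugator of `of x` to it. -/
def IsShortConjugator (u : FreeGroup α) (x : α) : Prop := ∀ a ∈ u.toWord.getLast?, a.1 ≠ x

theorem exists_isShortConjugator {c : FreeGroup α} {x : α} (hc : IsConj (of x) c) :
    ∃ u, u * of x * u⁻¹ = c ∧ IsShortConjugator u x := by
  obtain ⟨w, rfl⟩ := isConj_iff.1 hc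
  obtain ⟨u, hu, hmin⟩ :=
    (measure norm).wf.has_min {u | u * of x * u⁻¹ = w * of x * w⁻¹} ⟨w, rfl⟩
  refine ⟨u, hu, fun a ha hax => hmin (mk u.toWord.dropLast) ?_ ?_⟩
  · have hsplit : u = mk u.toWord.dropLast * mk [a] := by
      rw [mul_mk, List.dropLast_append_getLast? a ha, mk_toWord]
    have hcomm : Commute (mk [a]) (of x) := by
      obtain ⟨y, _ | _⟩ := a <;> subst hax
      exacts [(Commute.refl (of y)).inv_left, Commute.refl (of y)]
    show _ = _
    rw [← hu]
    conv_rhs => rw [hsplit, mul_inv_rev, mul_assoc (mk u.toWord.dropLast) (mk [a]), hcomm.eq]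
    group
  · have hlen : u.toWord.dropLast.length < u.toWord.length := by
      have := List.ne_nil_of_mem (List.mem_of_mem_getLast? ha)
      simp [List.length_pos_iff.2 this]
    exact norm_mk_le.trans_lt hlen

theorem toWord_conj_of {u : FreeGroup α} {x : α} (hu : IsShortConjugator u x) :
    (u * of x * u⁻¹).toWord = u.toWord ++ (x, true) :: invRev u.toWord := by
  have hux : (u * of x).toWord = u.toWord ++ [(x, true)] := by
    rw [toWord_mul_of_isReduced, toWord_of]
    refine List.isChain_append.2 ⟨isReduced_toWord, IsReduced.singleton, ?_⟩
    rintro a ha b ⟨⟩ hab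
    exact absurd hab (hu a ha)
  rw [toWord_mul_of_isReduced, hux, toWord_inv, List.append_assoc, List.singleton_append]
  refine List.isChain_append.2 ⟨isReduced_toWord, isReduced_toWord, ?_⟩
  rw [hux, toWord_inv, List.getLast?_concat, invRev, List.head?_reverse, List.getLast?_map]
  rintro _ ⟨⟩ _ hb
  obtain ⟨a, ha, rfl⟩ := Option.mem_map.1 hb
  exact fun hxa => absurd hxa.symm (hu a ha)

theorem norm_conj_of {u : FreeGroup α} {x : α} (hu : IsShortConjugator u x) :
    norm (u * of x * u⁻¹) = 2 * norm u + 1 := by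
  simp only [norm, toWord_conj_of hu, List.length_append, List.length_cons, invRev_length]
  ring

theorem norm_conj_of_le (w : FreeGroup α) (x : α) : norm (w * of x * w⁻¹) ≤ 2 * norm w + 1 := by
  have := (norm_mul_le (w * of x) w⁻¹).trans (Nat.add_le_add_right (norm_mul_le w (of x)) _)
  rw [norm_of, norm_inv_eq] at this
  omega

theorem norm_conj_lt_of_norm_mul_lt {u : FreeGroup α} {x : α} (hu : IsShortConjugator u x)
    (g : FreeGroup α) (hg : norm (g * u) < norm u) :
    norm (g * (u * of x * u⁻¹) * g⁻¹) < norm (u * of x * u⁻¹) := by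
  have hconj : g * (u * of x * u⁻¹) * g⁻¹ = g * u * of x * (g * u)⁻¹ := by group
  rw [hconj, norm_conj_of hu]
  linarith [norm_conj_of_le (g * u) x]

theorem norm_mul_lt_of_toWord_eq_append {u v : FreeGroup α} {a : α × Bool} {V : List (α × Bool)}
    (hv : v.toWord = u.toWord ++ a :: V) : norm (u * (mk [a])⁻¹ * u⁻¹ * v) < norm v := by
  have hsplit : v = u * mk [a] * mk V := by
    rw [← mk_toWord (x := v), hv, ← List.singleton_append, ← mul_mk, ← mul_mk, mk_toWord,
      mul_assoc]
  have hcancel : u * (mk [a])⁻¹ * u⁻¹ * v = u * mk V := by rw [hsplit]; group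
  have hlen : norm v = norm u + V.length + 1 := by
    simp only [norm, hv, List.length_append, List.length_cons]; ring
  have hle : norm (u * mk V) ≤ norm u + V.length := (norm_mul_le _ _).trans (by grw [norm_mk_le])
  rw [hcancel]
  omega

theorem exists_toWord_eq_append_cons {u v : FreeGroup α} {a : α × Bool}
    (ha : a ∈ (u⁻¹ * v).toWord.head?) (hu : IsShortConjugator u a.1) :
    ∃ V, v.toWord = u.toWord ++ a :: V := by
  obtain ⟨V, hV⟩ := List.head?_eq_some_iff.1 ha
  refine ⟨V, ?_⟩
  rw [← mul_inv_cancel_left u v, toWord_mul_of_isReduced, hV]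
  refine List.isChain_append.2 ⟨isReduced_toWord, isReduced_toWord, ?_⟩
  rw [hV]
  rintro b hb _ ⟨⟩ hba
  exact absurd hba (hu b hb)

/-- Neither Hurwitz move `(c, d) ↦ (c d c⁻¹, c)` nor `(c, d) ↦ (d, d⁻¹ c d)` shortens the pair. -/
def HurwitzMinimal (c d : FreeGroup α) : Prop :=
  norm d ≤ norm (c * d * c⁻¹) ∧ norm c ≤ norm (d⁻¹ * c * d)

theorem HurwitzMinimal.head_toWord_inv_mul_ne {u₀ u₁ : FreeGroup α} {x₀ x₁ : α}
    (hmin : HurwitzMinimal (u₀ * of x₀ * u₀⁻¹) (u₁ * of x₁ * u₁⁻¹))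
    (h₀ : IsShortConjugator u₀ x₀) (h₁ : IsShortConjugator u₁ x₁) :
    ∀ a ∈ (u₀⁻¹ * u₁).toWord.head?, a ≠ (x₀, false) := by
  rintro a ha rfl
  obtain ⟨V, hV⟩ := exists_toWord_eq_append_cons ha h₀
  exact hmin.1.not_gt (norm_conj_lt_of_norm_mul_lt h₁ _ (norm_mul_lt_of_toWord_eq_append hV))

theorem HurwitzMinimal.getLast_toWord_inv_mul_ne {u₀ u₁ : FreeGroup α} {x₀ x₁ : α}
    (hmin : HurwitzMinimal (u₀ * of x₀ * u₀⁻¹) (u₁ * of x₁ * u₁⁻¹))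
    (h₀ : IsShortConjugator u₀ x₀) (h₁ : IsShortConjugator u₁ x₁) :
    ∀ a ∈ (u₀⁻¹ * u₁).toWord.getLast?, a ≠ (x₁, false) := by
  rintro a ha rfl
  have hhead : (x₁, true) ∈ (u₁⁻¹ * u₀).toWord.head? := by
    rw [← inv_inv u₀, ← mul_inv_rev, toWord_inv, invRev, List.head?_reverse, List.getLast?_map]
    exact Option.mem_map_of_mem _ ha
  obtain ⟨V, hV⟩ := exists_toWord_eq_append_cons hhead h₁
  have hlt := norm_conj_lt_of_norm_mul_lt h₀ _ (norm_mul_lt_of_toWord_eq_append hV)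
  rw [show (mk [(x₁, true)] : FreeGroup α) = of x₁ from rfl] at hlt
  refine hmin.2.not_gt (lt_of_eq_of_lt (congrArg norm ?_) hlt)
  group

theorem toWord_conj_of_mul {u₀ u₁ z : FreeGroup α} {x₀ x₁ : α} {R : List (α × Bool)}
    (h₀ : IsShortConjugator u₀ x₀) (h₁ : IsShortConjugator u₁ x₁)
    (hmin : HurwitzMinimal (u₀ * of x₀ * u₀⁻¹) (u₁ * of x₁ * u₁⁻¹))
    (hz : z.toWord = u₁.toWord ++ (x₁, true) :: R) :
    (u₀ * of x₀ * u₀⁻¹ * z).toWord =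
      u₀.toWord ++ (x₀, true) :: ((u₀⁻¹ * u₁).toWord ++ (x₁, true) :: R) := by
  set S := (u₀⁻¹ * u₁).toWord with hS
  have hR : IsReduced ((x₁, true) :: R) :=
    (isReduced_toWord (x := z)).infix ⟨u₁.toWord, [], by rw [hz, List.append_nil]⟩
  have hSR : IsReduced (S ++ (x₁, true) :: R) := by
    refine List.isChain_append.2 ⟨isReduced_toWord, hR, ?_⟩
    rintro ⟨y, _ | _⟩ ha _ ⟨⟩ rfl
    exacts [absurd rfl (hmin.getLast_toWord_inv_mul_ne h₀ h₁ _ ha), rfl]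
  have hxSR : IsReduced ((x₀, true) :: (S ++ (x₁, true) :: R)) := by
    refine List.isChain_cons.2 ⟨?_, hSR⟩
    rintro ⟨y, _ | _⟩ hb rfl
    · rw [List.head?_append] at hb
      cases hs : S.head? with
      | none => simp [hs] at hb
      | some s =>
        simp only [hs, Option.some_or, Option.mem_def, Option.some.injEq] at hb
        exact absurd rfl (hmin.head_toWord_inv_mul_ne h₀ h₁ _ (hb ▸ hs))
    · rfl
  have hW : IsReduced (u₀.toWord ++ (x₀, true) :: (S ++ (x₁, true) :: R)) := by
    refine List.isChain_append.2 ⟨isReduced_toWord, hxSR, ?_⟩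
    rintro a ha _ ⟨⟩ hax
    exact absurd hax (h₀ a ha)
  have hz' : z = u₁ * mk ((x₁, true) :: R) := by
    rw [← mk_toWord (x := z), hz, ← mul_mk, mk_toWord]
  have hmk : u₀ * of x₀ * u₀⁻¹ * z =
      mk u₀.toWord * mk [(x₀, true)] * mk S * mk ((x₁, true) :: R) := by
    rw [mk_toWord, hS, mk_toWord, hz', show (mk [(x₀, true)] : FreeGroup α) = of x₀ from rfl]
    group
  rw [hmk, mul_mk, mul_mk, mul_mk, toWord_mk, List.append_assoc, List.append_assoc,
    List.singleton_append, hW.reduce_eq]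

theorem exists_toWord_prod_cons_eq {u : FreeGroup α} {x : α} (hu : IsShortConjugator u x)
    {l : List (FreeGroup α)} (hl : ∀ c ∈ l, ∃ y, IsConj (of y) c)
    (hchain : (u * of x * u⁻¹ :: l).IsChain HurwitzMinimal) :
    ∃ R, (u * of x * u⁻¹ :: l).prod.toWord = u.toWord ++ (x, true) :: R := by
  induction l generalizing u x with
  | nil => exact ⟨_, by rw [List.prod_singleton, toWord_conj_of hu]⟩
  | cons c l ih =>
    obtain ⟨y, hy⟩ := hl c List.mem_cons_self
    obtain ⟨v, rfl, hv⟩ := exists_isShortConjugator hy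
    obtain ⟨R, hR⟩ := ih hv (fun d hd => hl d (List.mem_cons_of_mem _ hd)) hchain.tail
    exact ⟨_, by
      rw [List.prod_cons, toWord_conj_of_mul hu hv (List.isChain_cons_cons.1 hchain).1 hR]⟩

theorem exists_eq_of_of_isPositive_prod {l : List (FreeGroup α)}
    (hl : ∀ c ∈ l, ∃ x, IsConj (of x) c) (hchain : l.IsChain HurwitzMinimal)
    (hpos : IsPositive l.prod) : ∀ c ∈ l, ∃ x, c = of x := by
  induction l with
  | nil => simp
  | cons c l ih =>
    obtain ⟨x, hx⟩ := hl c List.mem_cons_self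
    obtain ⟨u, rfl, hu⟩ := exists_isShortConjugator hx
    suffices u = 1 ∧ ∀ c ∈ l, ∃ x, c = of x by
      obtain ⟨rfl, hgen⟩ := this
      exact List.forall_mem_cons.2 ⟨⟨x, by group⟩, hgen⟩
    cases l with
    | nil =>
      rw [List.prod_singleton, IsPositive, toWord_conj_of hu] at hpos
      refine ⟨IsPositive.eq_one_of_inv (fun a ha => hpos a (by simp [ha])) fun a ha => ?_, by simp⟩
      exact hpos a (by simp [← toWord_inv, ha])
    | cons c₁ l =>
      obtain ⟨x₁, hx₁⟩ := hl c₁ (by simp)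
      obtain ⟨u₁, rfl, hu₁⟩ := exists_isShortConjugator hx₁
      have hl' : ∀ c ∈ u₁ * of x₁ * u₁⁻¹ :: l, ∃ y, IsConj (of y) c :=
        fun d hd => hl d (List.mem_cons_of_mem _ hd)
      obtain ⟨R, hR⟩ :=
        exists_toWord_prod_cons_eq hu₁ (fun d hd => hl' d (List.mem_cons_of_mem _ hd)) hchain.tail
      rw [List.prod_cons, IsPositive,
        toWord_conj_of_mul hu hu₁ (List.isChain_cons_cons.1 hchain).1 hR] at hpos
      have hposu : IsPositive u := fun a ha => hpos a (by simp [ha])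
      have hposS : IsPositive (u⁻¹ * u₁) := fun a ha => hpos a (by simp [ha])
      have hposu₁ : IsPositive u₁ := by simpa using hposu.mul hposS
      have htail : IsPositive (u₁ * of x₁ * u₁⁻¹ :: l).prod := by
        rw [IsPositive, hR]
        intro a ha
        rcases List.mem_append.1 ha with ha | ha
        exacts [hposu₁ a ha, hpos a (by simp [ha])]
      have hgen := ih hl' hchain.tail htail
      obtain ⟨y, hy⟩ := hgen _ List.mem_cons_self
      have hnorm := norm_conj_of hu₁
      rw [hy, norm_of] at hnorm
      obtain rfl : u₁ = 1 := norm_eq_zero.1 (by omega)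
      exact ⟨hposu.eq_one_of_inv (by simpa using hposS), hgen⟩

theorem isPositive_prod_ofFn {n : ℕ} {s : Fin n → FreeGroup α} (hs : ∀ i, ∃ x, s i = of x) :
    IsPositive (List.ofFn s).prod := by
  choose xs hxs using hs
  rw [show s = of ∘ xs from funext hxs, ← List.map_ofFn]
  exact isPositive_prod_map_of _

theorem eq_of_prod_ofFn_eq {n : ℕ} {s t : Fin n → FreeGroup α} (hs : ∀ i, ∃ x, s i = of x)
    (ht : ∀ i, ∃ x, t i = of x) (h : (List.ofFn s).prod = (List.ofFn t).prod) : s = t := by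
  choose xs hxs using hs
  choose ys hys using ht
  obtain rfl : s = of ∘ xs := funext hxs
  obtain rfl : t = of ∘ ys := funext hys
  rw [← List.map_ofFn, ← List.map_ofFn] at h
  rw [List.ofFn_injective (prod_map_of_injective h)]

end FreeGroup

open Function

theorem List.ofFn_update_update {β : Type*} {n : ℕ} (f : Fin (n + 1) → β) (i : Fin n) (a b : β) :
    ofFn (update (update f i.castSucc a) i.succ b) =
      (ofFn f).take i ++ a :: b :: (ofFn f).drop (i + 2) := by
  apply List.ext_getElem
  · simp only [length_ofFn, length_append, length_take, length_cons, length_drop]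
    omega
  · intro j h1 h2
    simp only [List.getElem_ofFn, getElem_append, getElem_cons, update_apply, Fin.ext_iff,
      length_take, length_ofFn, getElem_take, getElem_drop]
    grind

theorem List.ofFn_eq_take_append_cons_cons {β : Type*} {n : ℕ} (f : Fin (n + 1) → β) (i : Fin n) :
    ofFn f = (ofFn f).take i ++ f i.castSucc :: f i.succ :: (ofFn f).drop (i + 2) := by
  simpa using ofFn_update_update f i (f i.castSucc) (f i.succ)

theorem List.sum_map_ofFn_update_update {β M : Type*} [AddCommMonoid M] {n : ℕ} (φ : β → M)
    (f : Fin (n + 1) → β) (i : Fin n) (a b : β) :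
    ((ofFn (update (update f i.castSucc a) i.succ b)).map φ).sum +
        (φ (f i.castSucc) + φ (f i.succ)) =
      ((ofFn f).map φ).sum + (φ a + φ b) := by
  conv_rhs => rw [ofFn_eq_take_append_cons_cons f i]
  rw [ofFn_update_update]
  simp only [map_append, map_cons, sum_append, sum_cons]
  abel

theorem List.prod_ofFn_update_update {G : Type*} [Monoid G] {n : ℕ} (f : Fin (n + 1) → G)
    (i : Fin n) {a b : G} (hab : a * b = f i.castSucc * f i.succ) :
    (ofFn (update (update f i.castSucc a) i.succ b)).prod = (ofFn f).prod := by
  conv_rhs => rw [ofFn_eq_take_append_cons_cons f i]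
  rw [ofFn_update_update]
  simp only [prod_append, prod_cons, ← mul_assoc, hab]

theorem Equivalence.rel_apply_of_closure_eq_top {B X : Type*} [Group B] {r : X → X → Prop}
    (hr : Equivalence r) (A : B →* Equiv.Perm X) {S : Set B} (hS : Subgroup.closure S = ⊤)
    (h : ∀ s ∈ S, ∀ x, r x (A s x)) (b : B) (x : X) : r x (A b x) := by
  induction (hS ▸ Subgroup.mem_top b : b ∈ Subgroup.closure S) using Subgroup.closure_induction
    generalizing x with
  | mem s hs => exact h s hs x
  | one => simpa using hr.refl x
  | mul b c _ _ hb hc => simpa using hr.trans (hc x) (hb (A c x))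
  | inv b _ hb => simpa using hr.symm (hb ((A b)⁻¹ x))

section HurwitzAction

variable {G : Type*} [Group G] {k : ℕ}

def IsConjPerm {ι : Type*} (f g : ι → G) : Prop := ∃ τ : Equiv.Perm ι, ∀ i, IsConj (f (τ i)) (g i)

theorem isConjPerm_equivalence {ι : Type*} : Equivalence (IsConjPerm (G := G) (ι := ι)) where
  refl _ := ⟨1, fun _ => IsConj.refl _⟩
  symm := fun ⟨τ, h⟩ => ⟨τ⁻¹, fun i => by simpa using (h (τ⁻¹ i)).symm⟩
  trans := fun ⟨τ, h⟩ ⟨ρ, h'⟩ => ⟨τ * ρ, fun i => (h (ρ i)).trans (h' i)⟩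

def IsHurwitzAction (A : BraidGroup k →* Equiv.Perm (Fin (k + 1) → G)) : Prop :=
  ∀ (i : Fin k) (g : Fin (k + 1) → G),
    A (PresentedGroup.of i) g =
      update (update g i.castSucc (g i.castSucc * g i.succ * (g i.castSucc)⁻¹)) i.succ
        (g i.castSucc)

namespace IsHurwitzAction

variable {A : BraidGroup k →* Equiv.Perm (Fin (k + 1) → G)}

theorem isConjPerm_apply (hA : IsHurwitzAction A) (b : BraidGroup k) (f : Fin (k + 1) → G) :
    IsConjPerm f (A b f) := by
  refine isConjPerm_equivalence.rel_apply_of_closure_eq_top A (PresentedGroup.closure_range_of _)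
    ?_ b f
  rintro _ ⟨i, rfl⟩ f
  refine ⟨Equiv.swap i.castSucc i.succ, fun j => ?_⟩
  rw [hA]
  rcases eq_or_ne j i.succ with rfl | hs
  · rw [Equiv.swap_apply_right, update_self]
  rcases eq_or_ne j i.castSucc with rfl | hcs
  · rw [Equiv.swap_apply_left, update_of_ne hs, update_self]
    exact isConj_iff.2 ⟨_, rfl⟩
  · rw [Equiv.swap_apply_of_ne_of_ne hcs hs, update_of_ne hs, update_of_ne hcs]

theorem prod_apply (hA : IsHurwitzAction A) (b : BraidGroup k) (f : Fin (k + 1) → G) :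
    (List.ofFn (A b f)).prod = (List.ofFn f).prod := by
  refine Equivalence.rel_apply_of_closure_eq_top
    (r := fun f g => (List.ofFn g).prod = (List.ofFn f).prod)
    ⟨fun _ => rfl, Eq.symm, fun h₁ h₂ => h₂.trans h₁⟩ A (PresentedGroup.closure_range_of _) ?_ b f
  rintro _ ⟨i, rfl⟩ f
  rw [hA, List.prod_ofFn_update_update]
  group

theorem of_inv_apply (hA : IsHurwitzAction A) (i : Fin k) (f : Fin (k + 1) → G) :
    A (PresentedGroup.of i)⁻¹ f =
      update (update f i.castSucc (f i.succ)) i.succ ((f i.succ)⁻¹ * f i.castSucc * f i.succ) := by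
  rw [map_inv, Equiv.Perm.inv_eq_iff_eq, hA]
  ext j
  have hne : i.castSucc ≠ i.succ := Fin.castSucc_lt_succ.ne
  rcases eq_or_ne j i.succ with rfl | hs
  · simp [hne]
  rcases eq_or_ne j i.castSucc with rfl | hcs
  · simp only [update_of_ne hne, update_self]
    group
  · simp [update_of_ne hs, update_of_ne hcs]

end IsHurwitzAction

end HurwitzAction

theorem IsHurwitzAction.exists_hurwitzMinimal {α : Type*} [DecidableEq α] {k : ℕ}
    {A : BraidGroup k →* Equiv.Perm (Fin (k + 1) → FreeGroup α)} (hA : IsHurwitzAction A)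
    (f : Fin (k + 1) → FreeGroup α) :
    ∃ b, ∀ i : Fin k, FreeGroup.HurwitzMinimal (A b f i.castSucc) (A b f i.succ) := by
  induction hN : ((List.ofFn f).map FreeGroup.norm).sum using Nat.strong_induction_on
    generalizing f with
  | _ N ih =>
  by_cases hmin : ∀ i : Fin k, FreeGroup.HurwitzMinimal (f i.castSucc) (f i.succ)
  · exact ⟨1, by simpa using hmin⟩
  obtain ⟨i, hi⟩ := not_forall.1 hmin
  obtain ⟨b₀, hb₀⟩ : ∃ b₀, ((List.ofFn (A b₀ f)).map FreeGroup.norm).sum < N := by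
    rcases not_and_or.1 hi with hi | hi
    · refine ⟨PresentedGroup.of i, ?_⟩
      have := List.sum_map_ofFn_update_update FreeGroup.norm f i
        (f i.castSucc * f i.succ * (f i.castSucc)⁻¹) (f i.castSucc)
      rw [hA]
      omega
    · refine ⟨(PresentedGroup.of i)⁻¹, ?_⟩
      have := List.sum_map_ofFn_update_update FreeGroup.norm f i
        (f i.succ) ((f i.succ)⁻¹ * f i.castSucc * f i.succ)
      rw [hA.of_inv_apply]
      omega
  obtain ⟨b, hb⟩ := ih _ hb₀ (A b₀ f) rfl
  exact ⟨b * b₀, by simpa using hb⟩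

/-- Under the Hurwitz action of `B_n` (here `n = k + 1`) on `n`-tuples of elements of the free
group `F_m`, the orbit of a tuple `t` whose entries are free generators is exactly the set of
tuples `g` lying in `⋃_{τ ∈ S_n} C(t_{τ(1)}) × ⋯ × C(t_{τ(n)})` whose (ordered) product equals
the product of `t`, where `C(x)` denotes the conjugacy class. -/
theorem stmt_4 (k m : ℕ)
    (A : BraidGroup k →* Equiv.Perm (Fin (k + 1) → FreeGroup (Fin m)))
    (hA : ∀ (i : Fin k) (g : Fin (k + 1) → FreeGroup (Fin m)),
      A (PresentedGroup.of i) g =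
        Function.update
          (Function.update g i.castSucc (g i.castSucc * g i.succ * (g i.castSucc)⁻¹))
          i.succ (g i.castSucc))
    (t : Fin (k + 1) → FreeGroup (Fin m))
    (ht : ∀ i, ∃ j, t i = FreeGroup.of j) :
    ∀ g : Fin (k + 1) → FreeGroup (Fin m),
      (∃ b : BraidGroup k, A b t = g) ↔
        ((∃ τ : Equiv.Perm (Fin (k + 1)), ∀ i, IsConj (t (τ i)) (g i)) ∧
          (List.ofFn g).prod = (List.ofFn t).prod) := by
  have hA' : IsHurwitzAction A := hA
  intro g
  refine ⟨fun ⟨b, hb⟩ => hb ▸ ⟨hA'.isConjPerm_apply b t, hA'.prod_apply b t⟩,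
    fun ⟨hconj, hprod⟩ => ?_⟩
  obtain ⟨b, hmin⟩ := hA'.exists_hurwitzMinimal g
  obtain ⟨τ, hτ⟩ := isConjPerm_equivalence.trans hconj (hA'.isConjPerm_apply b g)
  have hprod' : (List.ofFn (A b g)).prod = (List.ofFn t).prod := (hA'.prod_apply b g).trans hprod
  have hgen : ∀ c ∈ List.ofFn (A b g), ∃ x, c = FreeGroup.of x := by
    refine FreeGroup.exists_eq_of_of_isPositive_prod ?_ ?_ ?_
    · refine List.forall_mem_ofFn_iff.2 fun i => ?_
      obtain ⟨x, hx⟩ := ht (τ i)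
      exact ⟨x, hx ▸ hτ i⟩
    · exact List.isChain_ofFn.2 fun i hi => hmin ⟨i, by omega⟩
    · exact hprod' ▸ FreeGroup.isPositive_prod_ofFn ht
  refine ⟨b⁻¹, ?_⟩
  rw [← FreeGroup.eq_of_prod_ofFn_eq (fun i => hgen _ (List.mem_ofFn.2 ⟨i, rfl⟩)) ht hprod']
  simp
end

section
/- For z = x + iy ∈ ℍ and δ > 0, the map p: [r : l : s] ↦ (l + i√(δ⁻¹ r s − l²))/r from the projectivization of the negative cone of q(r,l,s) = δl² − rs to ℍ is inverse to the map (x, y) ↦ [1 : x : δ(x² + y²)]. In particular, composing the two maps in either order gives the identity on their respective domains. -/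
/-! The square root in `p` is taken of `δ⁻¹rs − l² = −q(r,l,s)/δ`, which is positive exactly on
the negative cone. On the image `[1 : x : δ(x² + y²)]` of `x + iy` this radicand is `y²`, so `p`
recovers `y`; conversely `l² + (δ⁻¹rs − l²) = δ⁻¹rs` is what gives back the last coordinate. -/

variable {δ : ℝ}

theorem inv_mul_mul_sub_sq_eq (hδ : δ ≠ 0) (r l s : ℝ) :
    δ⁻¹ * r * s - l ^ 2 = -δ⁻¹ * (δ * l ^ 2 - r * s) := by
  field_simp
  ring

theorem inv_mul_mul_sub_sq_pos (hδ : 0 < δ) {r l s : ℝ} (hq : δ * l ^ 2 - r * s < 0) :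
    0 < δ⁻¹ * r * s - l ^ 2 := by
  rw [inv_mul_mul_sub_sq_eq hδ.ne']
  exact mul_pos_of_neg_of_neg (neg_neg_of_pos (inv_pos.2 hδ)) hq

theorem sqrt_inv_mul_one_mul_sub_sq (hδ : δ ≠ 0) (x : ℝ) {y : ℝ} (hy : 0 ≤ y) :
    √(δ⁻¹ * 1 * (δ * (x ^ 2 + y ^ 2)) - x ^ 2) = y := by
  have hradicand : δ⁻¹ * 1 * (δ * (x ^ 2 + y ^ 2)) - x ^ 2 = y ^ 2 := by
    field_simp
    ring
  rw [hradicand, Real.sqrt_sq hy]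

theorem mul_mul_div_sq_add_div_sq (hδ : δ ≠ 0) {r l s m : ℝ} (hr : r ≠ 0)
    (hm : m ^ 2 = δ⁻¹ * r * s - l ^ 2) :
    r * (δ * ((l / r) ^ 2 + (m / r) ^ 2)) = s := by
  rw [div_pow, div_pow, hm]
  field_simp
  ring

/-- The map `p : [r : l : s] ↦ (l + i√(δ⁻¹rs − l²))/r` from the (projectivized, normalized so
that `r > 0`) negative cone of `q(r,l,s) = δl² − rs` to the upper half plane is inverse to the
map `(x, y) ↦ [1 : x : δ(x² + y²)]`: both composites are the identity. -/
theorem stmt_7 (δ : ℝ) (hδ : 0 < δ) :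
    (∀ x y : ℝ, 0 < y →
      δ * x ^ 2 - 1 * (δ * (x ^ 2 + y ^ 2)) < 0 ∧
      ((x : ℂ) + (Real.sqrt (δ⁻¹ * 1 * (δ * (x ^ 2 + y ^ 2)) - x ^ 2) : ℝ) * Complex.I) / 1
        = (x : ℂ) + (y : ℝ) * Complex.I) ∧
    (∀ r l s : ℝ, 0 < r → δ * l ^ 2 - r * s < 0 →
      0 < Real.sqrt (δ⁻¹ * r * s - l ^ 2) / r ∧
      r * (l / r) = l ∧
      r * (δ * ((l / r) ^ 2 + (Real.sqrt (δ⁻¹ * r * s - l ^ 2) / r) ^ 2)) = s) := by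
  refine ⟨fun x y hy => ⟨?_, ?_⟩, fun r l s hr hq => ⟨?_, mul_div_cancel₀ l hr.ne', ?_⟩⟩
  · linarith [mul_pos hδ (pow_pos hy 2)]
  · rw [sqrt_inv_mul_one_mul_sub_sq hδ.ne' x hy.le, div_one]
  · exact div_pos (Real.sqrt_pos.2 (inv_mul_mul_sub_sq_pos hδ hq)) hr
  · exact mul_mul_div_sq_add_div_sq hδ.ne' hr.ne'
      (Real.sq_sqrt (inv_mul_mul_sub_sq_pos hδ hq).le)
end

section
/- Let φ be the Möbius transformation of ℍ given by a real matrix [[a,b],[c,d]] with positive determinant, and let Φ be the 3×3 matrix [[d², 2cd, c²/δ], [bd, bc+ad, ac/δ], [b²δ, 2abδ, a²]] acting on [r : l : s] ∈ ℙ(ℝ³). Then for every (r,l,s) with δl² − rs < 0, one has p(Φ · [r:l:s]) = φ(p([r:l:s])), where p([r:l:s]) = (l + i√(δ⁻¹rs − l²))/r (normalized with r > 0). -/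
/-- The identification `p : [r:l:s] ↦ (l + i√(δ⁻¹rs − l²))/r` of the projectivized negative cone
of `q(r,l,s) = δl² − rs` with the upper half plane intertwines the action of the 3×3 matrix
`Φ = [[d², 2cd, c²/δ], [bd, bc+ad, ac/δ], [b²δ, 2abδ, a²]]` with the Möbius transformation
`z ↦ (az+b)/(cz+d)`, for any real matrix `[[a,b],[c,d]]` of positive determinant. -/
theorem stmt_9 (δ a b c d r l s : ℝ) (hδ : 0 < δ) (hdet : 0 < a * d - b * c)
    (hr : 0 < r) (hq : δ * l ^ 2 - r * s < 0) :
    let P : ℝ → ℝ → ℝ → ℂ := fun r' l' s' =>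
      ((l' : ℂ) + (Real.sqrt (δ⁻¹ * r' * s' - l' ^ 2) : ℝ) * Complex.I) / (r' : ℂ)
    P (d ^ 2 * r + 2 * c * d * l + c ^ 2 / δ * s)
      (b * d * r + (b * c + a * d) * l + a * c / δ * s)
      (b ^ 2 * δ * r + 2 * a * b * δ * l + a ^ 2 * s)
      = ((a : ℂ) * P r l s + (b : ℂ)) / ((c : ℂ) * P r l s + (d : ℂ)) := by
  intro P
  simp only [P]
  have hupos : 0 < δ⁻¹ * r * s - l ^ 2 := by
    have h : δ⁻¹ * r * s - l ^ 2 = (r * s - δ * l ^ 2) / δ := by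
      field_simp
    rw [h]
    exact div_pos (by linarith) hδ
  set t := Real.sqrt (δ⁻¹ * r * s - l ^ 2) with htdef
  have ht2 : t ^ 2 = δ⁻¹ * r * s - l ^ 2 := Real.sq_sqrt hupos.le
  have htpos : 0 < t := Real.sqrt_pos.mpr hupos
  have ht2' : δ * t ^ 2 = r * s - δ * l ^ 2 := by
    rw [ht2]; field_simp
  have hs : s = δ * (t ^ 2 + l ^ 2) / r := by
    rw [eq_div_iff hr.ne']
    linear_combination -ht2'
  set R := d ^ 2 * r + 2 * c * d * l + c ^ 2 / δ * s with hRdef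
  set L := b * d * r + (b * c + a * d) * l + a * c / δ * s with hLdef
  set S := b ^ 2 * δ * r + 2 * a * b * δ * l + a ^ 2 * s with hSdef
  have hRr : R * r = (c * l + d * r) ^ 2 + c ^ 2 * t ^ 2 := by
    rw [hRdef, hs]; field_simp; ring
  have hRpos : 0 < R := by
    have h1 : 0 < (c * l + d * r) ^ 2 + c ^ 2 * t ^ 2 := by
      rcases eq_or_ne c 0 with hc | hc
      · have hd : d ≠ 0 := by
          intro hd0; rw [hc, hd0] at hdet; simp at hdet
        have h2 : (0:ℝ) < (d * r) ^ 2 :=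
          lt_of_le_of_ne (sq_nonneg _) (Ne.symm (pow_ne_zero 2 (mul_ne_zero hd hr.ne')))
        rw [hc]; simpa using h2
      · have h2 : 0 < c ^ 2 * t ^ 2 :=
          mul_pos (lt_of_le_of_ne (sq_nonneg c) (Ne.symm (pow_ne_zero 2 hc))) (pow_pos htpos 2)
        nlinarith [sq_nonneg (c * l + d * r)]
    have h3 : R = ((c * l + d * r) ^ 2 + c ^ 2 * t ^ 2) / r := by
      rw [eq_div_iff hr.ne']; exact hRr
    rw [h3]; exact div_pos h1 hr
  have hsq : Real.sqrt (δ⁻¹ * R * S - L ^ 2) = (a * d - b * c) * t := by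
    rw [show δ⁻¹ * R * S - L ^ 2 = ((a * d - b * c) * t) ^ 2 by
      rw [hRdef, hLdef, hSdef, hs]; field_simp; ring]
    exact Real.sqrt_sq (mul_nonneg hdet.le htpos.le)
  rw [hsq]
  have hrC : (r : ℂ) ≠ 0 := by exact_mod_cast hr.ne'
  have hRC : (R : ℂ) ≠ 0 := by exact_mod_cast hRpos.ne'
  have hδC : (δ : ℂ) ≠ 0 := by exact_mod_cast hδ.ne'
  have hsC : (s : ℂ) = (δ : ℂ) * ((t : ℂ) ^ 2 + (l : ℂ) ^ 2) / (r : ℂ) := by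
    have := congrArg Complex.ofReal hs
    push_cast at this
    exact this
  have hden : (c : ℂ) * (((l : ℂ) + (t : ℂ) * Complex.I) / (r : ℂ)) + (d : ℂ) ≠ 0 := by
    intro h
    have h1 : ((c * l + d * r : ℝ) : ℂ) + ((c * t : ℝ) : ℂ) * Complex.I = 0 := by
      rw [show ((c * l + d * r : ℝ) : ℂ) + ((c * t : ℝ) : ℂ) * Complex.I
          = ((c : ℂ) * (((l : ℂ) + (t : ℂ) * Complex.I) / (r : ℂ)) + (d : ℂ)) * r by
        push_cast
        field_simp
        ring, h, zero_mul]
    have h2 : c * l + d * r = 0 ∧ c * t = 0 := by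
      constructor
      · have := congrArg Complex.re h1; simpa using this
      · have := congrArg Complex.im h1; simpa using this
    rcases eq_or_ne c 0 with hc | hc
    · have hd : d = 0 := by
        have h3 := h2.1
        rw [hc, zero_mul, zero_add] at h3
        rcases mul_eq_zero.mp h3 with h | h
        · exact h
        · exact absurd h hr.ne'
      rw [hc, hd] at hdet; simp at hdet
    · exact htpos.ne' ((mul_eq_zero.mp h2.2).resolve_left hc)
  rw [div_eq_div_iff hRC hden]
  rw [hRdef, hLdef]
  push_cast
  rw [hsC]
  field_simp
  ring_nf
  simp only [Complex.I_sq]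
  ring
end

section
/- Let p be a prime, let δ be a positive integer with p ∤ δ, and let φ ∈ M₂(ℚ) with det φ ≠ 0 be such that Φ/det φ ∈ M₃(ℤ_p), where Φ = [[d², 2cd, c²/δ], [bd, bc+ad, ac/δ], [b²δ, 2abδ, a²]] for φ = [[a,b],[c,d]] and ℤ_p is the localisation of ℤ at p. Then, after multiplying φ by a suitable power of p, φ lies in the unit group of the order Λ_p = [[ℤ_p, ℤ_p],[δℤ_p, ℤ_p]]. -/
/-!
Write `|·|` for the `p`-adic norm, for which `δ` is a unit. The corner entries of `Φ / det φ` give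
`|x|² ≤ |det φ|` for every entry `x` of `φ`, while the ultrametric inequality gives
`|det φ| ≤ max |x|²`. So `|det φ| = |x₀|²` for an entry `x₀` of largest norm, and `p^(-v_p(x₀)) • φ`
has `p`-integral entries and unit determinant; its inverse, the adjugate over the determinant,
is then `p`-integral as well.
-/

/-- Membership in `ℤ_p ⊂ ℚ`, the localisation of `ℤ` at the prime ideal `(p)`:
rationals expressible with denominator prime to `p`. -/
def inZp (p : ℕ) (x : ℚ) : Prop := ∃ a b : ℤ, ¬ (p : ℤ) ∣ b ∧ x = (a : ℚ) / (b : ℚ)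

/-- Membership in the order `Λ_p = [[ℤ_p, ℤ_p], [δℤ_p, ℤ_p]] ⊂ M₂(ℚ)`. -/
def inLambda (p δ : ℕ) (M : Matrix (Fin 2) (Fin 2) ℚ) : Prop :=
  inZp p (M 0 0) ∧ inZp p (M 0 1) ∧ (∃ y : ℚ, inZp p y ∧ M 1 0 = (δ : ℚ) * y) ∧ inZp p (M 1 1)

/-- Membership in the unit group `Λ_p^×`. -/
def inLambdaUnits (p δ : ℕ) (M : Matrix (Fin 2) (Fin 2) ℚ) : Prop :=
  inLambda p δ M ∧ ∃ N : Matrix (Fin 2) (Fin 2) ℚ, inLambda p δ N ∧ M * N = 1 ∧ N * M = 1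

section

variable {p : ℕ} [hp : Fact p.Prime]

theorem inZp_iff_padicNorm_le_one {x : ℚ} : inZp p x ↔ padicNorm p x ≤ 1 := by
  constructor
  · rintro ⟨a, b, hb, rfl⟩
    rw [padicNorm.div, (padicNorm.int_eq_one_iff b).2 hb, div_one]
    exact padicNorm.of_int a
  · intro hx
    refine ⟨x.num, x.den, fun hden => ?_, (Rat.num_div_den x).symm⟩
    have hden' : p ∣ x.den := Int.ofNat_dvd.mp hden
    have hnum : ¬ (p : ℤ) ∣ x.num := fun hnum => hp.out.one_lt.ne'
      (Nat.eq_one_of_dvd_coprimes x.reduced (Int.natAbs_dvd_natAbs.mpr hnum) hden')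
    have hx' : padicNorm p x = (padicNorm p x.den)⁻¹ := by
      conv_lhs => rw [← Rat.num_div_den x]
      rw [padicNorm.div, (padicNorm.int_eq_one_iff _).2 hnum, one_div]
    have hden_pos : 0 < padicNorm p x.den :=
      (IsAbsoluteValue.abv_pos (padicNorm p)).2 (mod_cast x.den_nz)
    have := (one_lt_inv₀ hden_pos).2 ((padicNorm.nat_lt_one_iff _).2 hden')
    linarith

theorem padicNorm_le_of_inZp_inv_mul {D e : ℚ} (hD : D ≠ 0) (h : inZp p (D⁻¹ * e)) :
    padicNorm p e ≤ padicNorm p D := by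
  rwa [inZp_iff_padicNorm_le_one, padicNorm.mul, IsAbsoluteValue.abv_inv (padicNorm p),
    inv_mul_le_iff₀ ((IsAbsoluteValue.abv_pos (padicNorm p)).2 hD), mul_one] at h

theorem padicNorm_zpow_neg_padicValRat {x : ℚ} (hx : x ≠ 0) :
    padicNorm p ((p : ℚ) ^ (-padicValRat p x)) = (padicNorm p x)⁻¹ := by
  have hzpow : padicNorm p ((p : ℚ) ^ (-padicValRat p x)) = padicNorm p p ^ (-padicValRat p x) :=
    map_zpow₀ (IsAbsoluteValue.abvHom' (padicNorm p)) _ _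
  rw [hzpow, padicNorm.padicNorm_p_of_prime, padicNorm.eq_zpow_of_nonzero hx, inv_zpow', zpow_neg]

theorem padicNorm_zpow_neg_padicValRat_mul_le_one {x y : ℚ} (hx : x ≠ 0)
    (hy : padicNorm p y ≤ padicNorm p x) :
    padicNorm p ((p : ℚ) ^ (-padicValRat p x) * y) ≤ 1 := by
  rwa [padicNorm.mul, padicNorm_zpow_neg_padicValRat hx,
    inv_mul_le_iff₀ ((IsAbsoluteValue.abv_pos (padicNorm p)).2 hx), mul_one]

theorem exists_padicNorm_sq_eq_det {a b c d : ℚ} (hdet : a * d - b * c ≠ 0)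
    (hsq : ∀ y ∈ ({a, b, c, d} : Finset ℚ), padicNorm p y ^ 2 ≤ padicNorm p (a * d - b * c)) :
    ∃ x ≠ 0, padicNorm p (a * d - b * c) = padicNorm p x ^ 2 ∧
      ∀ y ∈ ({a, b, c, d} : Finset ℚ), padicNorm p y ≤ padicNorm p x := by
  obtain ⟨x, hxS, hmax⟩ :=
    Finset.exists_max_image _ (padicNorm p) (Finset.insert_nonempty a {b, c, d})
  have hprod : ∀ y ∈ ({a, b, c, d} : Finset ℚ), ∀ z ∈ ({a, b, c, d} : Finset ℚ),
      padicNorm p (y * z) ≤ padicNorm p x ^ 2 := fun y hy z hz => by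
    rw [padicNorm.mul, sq]
    exact mul_le_mul (hmax y hy) (hmax z hz) (padicNorm.nonneg z) (padicNorm.nonneg x)
  have hle : padicNorm p (a * d - b * c) ≤ padicNorm p x ^ 2 :=
    padicNorm.sub.trans (max_le (hprod a (by simp) d (by simp)) (hprod b (by simp) c (by simp)))
  have heq := le_antisymm hle (hsq x hxS)
  refine ⟨x, ?_, heq, hmax⟩
  rintro rfl
  exact padicNorm.nonzero hdet (by simpa [padicNorm.zero] using heq)

variable {δ : ℕ}

theorem inLambda_of_padicNorm_le_one (hpδ : ¬ p ∣ δ)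
    {M : Matrix (Fin 2) (Fin 2) ℚ} (hM : ∀ i j, padicNorm p (M i j) ≤ 1) : inLambda p δ M := by
  have hδ : padicNorm p (δ : ℚ) = 1 := (padicNorm.nat_eq_one_iff δ).2 hpδ
  have hδ0 : (δ : ℚ) ≠ 0 := Nat.cast_ne_zero.2 (by rintro rfl; exact hpδ (dvd_zero p))
  simp only [inLambda, inZp_iff_padicNorm_le_one]
  refine ⟨hM 0 0, hM 0 1, ⟨M 1 0 / δ, ?_, (mul_div_cancel₀ _ hδ0).symm⟩, hM 1 1⟩
  rw [padicNorm.div, hδ, div_one]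
  exact hM 1 0

theorem inLambdaUnits_of_padicNorm_le_one (hpδ : ¬ p ∣ δ)
    {M : Matrix (Fin 2) (Fin 2) ℚ} (hM : ∀ i j, padicNorm p (M i j) ≤ 1)
    (hdet : padicNorm p M.det = 1) : inLambdaUnits p δ M := by
  have hunit : IsUnit M.det := isUnit_iff_ne_zero.2 fun h => by simp [h, padicNorm.zero] at hdet
  refine ⟨inLambda_of_padicNorm_le_one hpδ hM, M⁻¹, inLambda_of_padicNorm_le_one hpδ fun i j => ?_,
    M.mul_nonsing_inv hunit, M.nonsing_inv_mul hunit⟩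
  rw [M.inv_def, Ring.inverse_eq_inv', M.adjugate_fin_two, Matrix.smul_apply, smul_eq_mul,
    padicNorm.mul, IsAbsoluteValue.abv_inv (padicNorm p), hdet, inv_one, one_mul]
  fin_cases i <;> fin_cases j <;> simp [padicNorm.neg, hM]

end

theorem stmt_13_general (p : ℕ) (hp : p.Prime) (δ : ℕ) (hpδ : ¬ p ∣ δ)
    (a b c d : ℚ) (hdet : a * d - b * c ≠ 0)
    (hΦ : ∀ i j : Fin 3,
      inZp p (((a * d - b * c)⁻¹ •
        (!![d ^ 2, 2 * c * d, c ^ 2 / (δ : ℚ);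
            b * d, b * c + a * d, a * c / (δ : ℚ);
            b ^ 2 * (δ : ℚ), 2 * a * b * (δ : ℚ), a ^ 2] :
          Matrix (Fin 3) (Fin 3) ℚ)) i j)) :
    ∃ k : ℤ, inLambdaUnits p δ (((p : ℚ) ^ k) • !![a, b; c, d]) := by
  have := Fact.mk hp
  have hδ : padicNorm p (δ : ℚ) = 1 := (padicNorm.nat_eq_one_iff δ).2 hpδ
  have hentry := fun i j => padicNorm_le_of_inZp_inv_mul hdet (by simpa using hΦ i j)
  have hsq : ∀ y ∈ ({a, b, c, d} : Finset ℚ), padicNorm p y ^ 2 ≤ padicNorm p (a * d - b * c) := by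
    simp only [Finset.mem_insert, Finset.mem_singleton, forall_eq_or_imp, forall_eq,
      ← IsAbsoluteValue.abv_pow (padicNorm p)]
    refine ⟨hentry 2 2, ?_, ?_, hentry 0 0⟩
    · simpa [padicNorm.mul, hδ] using hentry 2 0
    · simpa [padicNorm.div, hδ] using hentry 0 2
  obtain ⟨x, hx0, hdetx, hmax⟩ := exists_padicNorm_sq_eq_det hdet hsq
  refine ⟨-padicValRat p x, inLambdaUnits_of_padicNorm_le_one hpδ (fun i j => ?_) ?_⟩
  · fin_cases i <;> fin_cases j <;>
      exact padicNorm_zpow_neg_padicValRat_mul_le_one hx0 (hmax _ (by simp))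
  · rw [Matrix.det_smul, Matrix.det_fin_two_of, Fintype.card_fin, padicNorm.mul,
      IsAbsoluteValue.abv_pow (padicNorm p), padicNorm_zpow_neg_padicValRat hx0, hdetx, inv_pow,
      inv_mul_cancel₀ (pow_ne_zero 2 (padicNorm.nonzero hx0))]

/-- Let `p` be a prime not dividing the positive integer `δ`, and let
`φ = [[a,b],[c,d]] ∈ M₂(ℚ)` with `det φ ≠ 0` be such that `Φ / det φ ∈ M₃(ℤ_p)`, where
`Φ = [[d², 2cd, c²/δ], [bd, bc+ad, ac/δ], [b²δ, 2abδ, a²]]`.  Then after multiplying `φ` by a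
suitable power of `p`, `φ` lies in `Λ_p^×`. -/
theorem stmt_13 (p : ℕ) (hp : p.Prime) (δ : ℕ) (hδ : 0 < δ) (hpδ : ¬ p ∣ δ)
    (a b c d : ℚ) (hdet : a * d - b * c ≠ 0)
    (hΦ : ∀ i j : Fin 3,
      inZp p (((a * d - b * c)⁻¹ •
        (!![d ^ 2, 2 * c * d, c ^ 2 / (δ : ℚ);
            b * d, b * c + a * d, a * c / (δ : ℚ);
            b ^ 2 * (δ : ℚ), 2 * a * b * (δ : ℚ), a ^ 2] :
          Matrix (Fin 3) (Fin 3) ℚ)) i j)) :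
    ∃ k : ℤ, inLambdaUnits p δ (((p : ℚ) ^ k) • !![a, b; c, d]) :=
  stmt_13_general p hp δ hpδ a b c d hdet hΦ
end

section
/- Let δ be a positive integer and e an exact divisor of δ (i.e. e | δ and gcd(e, δ/e) = 1). Let x ∈ GL₂⁺(ℚ). Then x is an Atkin–Lehner element associated to e (an integer matrix [[ae, b],[cδ, de]] of determinant e) if and only if for every prime p dividing e one has x ∈ [[0,−1],[δ,0]]·Λ_p^×, and for every prime p not dividing e one has x ∈ Λ_p^×, where Λ_p = [[ℤ_p, ℤ_p],[δℤ_p, ℤ_p]] and ℤ_p is the localisation of ℤ at p. -/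
section LocalIntegers

variable {p : ℕ} {x y : ℚ}

lemma inZp_iff_not_dvd_den : inZp p x ↔ ¬ p ∣ x.den := by
  constructor
  · rintro ⟨a, b, hb, rfl⟩ hden
    rw [← Rat.divInt_eq_div] at hden
    exact hb ((Int.natCast_dvd_natCast.2 hden).trans (Rat.den_dvd a b))
  · exact fun h => ⟨x.num, x.den, by exact_mod_cast h, (Rat.num_div_den x).symm⟩

lemma inZp_mul (hp : p.Prime) (hx : inZp p x) (hy : inZp p y) : inZp p (x * y) := by
  rw [inZp_iff_not_dvd_den] at *
  exact fun h => (hp.dvd_mul.1 (h.trans (Rat.mul_den_dvd x y))).elim hx hy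

lemma inZp_add (hp : p.Prime) (hx : inZp p x) (hy : inZp p y) : inZp p (x + y) := by
  rw [inZp_iff_not_dvd_den] at *
  exact fun h => (hp.dvd_mul.1 (h.trans (Rat.add_den_dvd x y))).elim hx hy

lemma inZp_neg_iff : inZp p (-x) ↔ inZp p x := by
  rw [inZp_iff_not_dvd_den, inZp_iff_not_dvd_den, Rat.neg_den]

lemma inZp_sub (hp : p.Prime) (hx : inZp p x) (hy : inZp p y) : inZp p (x - y) :=
  sub_eq_add_neg x y ▸ inZp_add hp hx (inZp_neg_iff.2 hy)

lemma inZp_intCast (hp : p ≠ 1) (n : ℤ) : inZp p n := by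
  simp [inZp_iff_not_dvd_den, hp]

lemma inZp_natCast (hp : p ≠ 1) (n : ℕ) : inZp p n := by
  exact_mod_cast inZp_intCast hp n

lemma inZp_inv_natCast {n : ℕ} (hn : ¬ p ∣ n) : inZp p (n : ℚ)⁻¹ := by
  rwa [inZp_iff_not_dvd_den, Rat.inv_natCast_den, if_neg (by rintro rfl; exact hn (dvd_zero p))]

lemma inZp_div_natCast_iff (hp : p.Prime) {n : ℕ} (hn : ¬ p ∣ n) : inZp p (x / n) ↔ inZp p x := by
  have hn0 : (n : ℚ) ≠ 0 := by exact_mod_cast (by rintro rfl; exact hn (dvd_zero p))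
  refine ⟨fun h => ?_, fun h => inZp_mul hp h (inZp_inv_natCast hn)⟩
  simpa [div_mul_cancel₀ x hn0] using inZp_mul hp h (inZp_natCast hp.ne_one n)

lemma inZp_natCast_mul_iff (hp : p.Prime) {n : ℕ} (hn : ¬ p ∣ n) : inZp p (n * x) ↔ inZp p x := by
  rw [← inZp_div_natCast_iff hp hn, mul_div_cancel_left₀ x]
  exact_mod_cast (by rintro rfl; exact hn (dvd_zero p))

lemma forall_inZp_iff : (∀ p : ℕ, p.Prime → inZp p x) ↔ ∃ n : ℤ, x = n := by
  refine ⟨fun h => ⟨x.num, ?_⟩, fun ⟨n, hn⟩ p hp => hn ▸ inZp_intCast hp.ne_one n⟩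
  refine ((Rat.den_eq_one_iff x).1 ?_).symm
  by_contra hden
  obtain ⟨p, hp, hpd⟩ := Nat.exists_prime_and_dvd hden
  exact inZp_iff_not_dvd_den.1 (h p hp) hpd

end LocalIntegers

section Order

variable {p δ : ℕ} {M : Matrix (Fin 2) (Fin 2) ℚ}

lemma exists_inZp_eq_natCast_mul_iff (hδ : δ ≠ 0) {x : ℚ} :
    (∃ y, inZp p y ∧ x = δ * y) ↔ inZp p (x / δ) := by
  have hδQ : (δ : ℚ) ≠ 0 := Nat.cast_ne_zero.2 hδ
  refine ⟨fun ⟨y, hy, hx⟩ => ?_, fun h => ⟨x / δ, h, (mul_div_cancel₀ x hδQ).symm⟩⟩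
  rwa [hx, mul_div_cancel_left₀ y hδQ]

lemma inLambda_iff (hδ : δ ≠ 0) :
    inLambda p δ M ↔ inZp p (M 0 0) ∧ inZp p (M 0 1) ∧ inZp p (M 1 0 / δ) ∧ inZp p (M 1 1) := by
  rw [inLambda, exists_inZp_eq_natCast_mul_iff hδ]

lemma inLambda.inZp_det (hp : p.Prime) (h : inLambda p δ M) : inZp p M.det := by
  obtain ⟨h00, h01, ⟨y, hy, h10⟩, h11⟩ := h
  rw [Matrix.det_fin_two, h10]
  exact inZp_sub hp (inZp_mul hp h00 h11)
    (inZp_mul hp h01 (inZp_mul hp (inZp_natCast hp.ne_one δ) hy))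

lemma inLambda.inv (hp : p.Prime) (h : inLambda p δ M) (hdet : inZp p M.det⁻¹) :
    inLambda p δ M⁻¹ := by
  obtain ⟨h00, h01, ⟨y, hy, h10⟩, h11⟩ := h
  rw [Matrix.inv_def, Matrix.adjugate_fin_two, Ring.inverse_eq_inv']
  refine ⟨?_, ?_, ⟨-(M.det⁻¹ * y), ?_, ?_⟩, ?_⟩
  · simpa using inZp_mul hp hdet h11
  · simpa using inZp_mul hp hdet (inZp_neg_iff.2 h01)
  · exact inZp_neg_iff.2 (inZp_mul hp hdet hy)
  · simp only [h10, Matrix.smul_apply, Matrix.of_apply, Matrix.cons_val', Matrix.cons_val_zero,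
      Matrix.cons_val_fin_one, Matrix.cons_val_one, smul_eq_mul]
    ring
  · simpa using inZp_mul hp hdet h00

lemma inLambdaUnits_iff (hp : p.Prime) :
    inLambdaUnits p δ M ↔ inLambda p δ M ∧ M.det ≠ 0 ∧ inZp p M.det⁻¹ := by
  constructor
  · rintro ⟨hM, N, hN, hMN, -⟩
    have hdet : M.det * N.det = 1 := by rw [← Matrix.det_mul, hMN, Matrix.det_one]
    exact ⟨hM, left_ne_zero_of_mul_eq_one hdet, inv_eq_of_mul_eq_one_right hdet ▸ hN.inZp_det hp⟩
  · rintro ⟨hM, hdet, hinv⟩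
    have hu : IsUnit M.det := isUnit_iff_ne_zero.2 hdet
    exact ⟨hM, M⁻¹, hM.inv hp hinv, M.mul_nonsing_inv hu, M.nonsing_inv_mul hu⟩

end Order

/-- `X ∈ [[e ℤ_p, ℤ_p], [δ ℤ_p, e ℤ_p]]` and `det X ∈ e ℤ_p^×`. -/
def IsAtkinLehnerAt (p δ e : ℕ) (X : Matrix (Fin 2) (Fin 2) ℚ) : Prop :=
  inZp p (X 0 0 / e) ∧ inZp p (X 0 1) ∧ inZp p (X 1 0 / δ) ∧ inZp p (X 1 1 / e) ∧
    inZp p (X.det / e) ∧ inZp p (e / X.det)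

section AtkinLehner

variable {p δ e : ℕ} {X : Matrix (Fin 2) (Fin 2) ℚ}

lemma isAtkinLehnerAt_iff_inLambdaUnits (hp : p.Prime) (hpe : ¬ p ∣ e) (hδ : δ ≠ 0)
    (hX : X.det ≠ 0) : IsAtkinLehnerAt p δ e X ↔ inLambdaUnits p δ X := by
  simp only [IsAtkinLehnerAt, inZp_div_natCast_iff hp hpe]
  rw [div_eq_mul_inv (e : ℚ), inZp_natCast_mul_iff hp hpe, inLambdaUnits_iff hp, inLambda_iff hδ]
  constructor
  · rintro ⟨h00, h01, h10, h11, -, hinv⟩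
    exact ⟨⟨h00, h01, h10, h11⟩, hX, hinv⟩
  · rintro ⟨hΛ, -, hinv⟩
    have hdet := ((inLambda_iff hδ).2 hΛ).inZp_det hp
    obtain ⟨h00, h01, h10, h11⟩ := hΛ
    exact ⟨h00, h01, h10, h11, hdet, hinv⟩

lemma eq_fricke_mul_iff (hδ : δ ≠ 0) {U : Matrix (Fin 2) (Fin 2) ℚ} :
    X = !![0, -1; (δ : ℚ), 0] * U ↔ U = !![X 1 0 / δ, X 1 1 / δ; -X 0 0, -X 0 1] := by
  have hδQ : (δ : ℚ) ≠ 0 := Nat.cast_ne_zero.2 hδ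
  rw [← Matrix.ext_iff, ← Matrix.ext_iff]
  simp only [Fin.forall_fin_two, Matrix.mul_apply, Fin.sum_univ_two, Matrix.of_apply,
    Matrix.cons_val', Matrix.cons_val_fin_one, Matrix.cons_val_zero, Matrix.cons_val_one, zero_mul,
    neg_mul, one_mul, zero_add, add_zero, eq_div_iff hδQ]
  grind

lemma isAtkinLehnerAt_iff_exists_inLambdaUnits (hp : p.Prime) {m : ℕ} (hδ : δ = e * m)
    (hδ0 : δ ≠ 0) (hpm : ¬ p ∣ m) (hX : X.det ≠ 0) :
    IsAtkinLehnerAt p δ e X ↔ ∃ U, inLambdaUnits p δ U ∧ X = !![0, -1; (δ : ℚ), 0] * U := by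
  have hδQ : (δ : ℚ) = e * m := by exact_mod_cast hδ
  have hdivδ (x : ℚ) : inZp p (x / δ) ↔ inZp p (x / e) := by
    rw [hδQ, ← div_div, inZp_div_natCast_iff hp hpm]
  have hdet : (!![X 1 0 / δ, X 1 1 / δ; -X 0 0, -X 0 1]).det = X.det / δ := by
    rw [Matrix.det_fin_two_of, Matrix.det_fin_two]
    ring
  have hinv : inZp p (δ / X.det) ↔ inZp p (e / X.det) := by
    rw [hδQ, mul_comm, mul_div_assoc, inZp_natCast_mul_iff hp hpm]
  have hU : inLambda p δ !![X 1 0 / δ, X 1 1 / δ; -X 0 0, -X 0 1] ↔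
      inZp p (X 1 0 / δ) ∧ inZp p (X 1 1 / e) ∧ inZp p (X 0 0 / e) ∧ inZp p (X 0 1) := by
    simp [inLambda_iff hδ0, neg_div, inZp_neg_iff, hdivδ]
  simp only [eq_fricke_mul_iff hδ0, exists_eq_right, inLambdaUnits_iff hp, hdet, inv_div, hinv]
  constructor
  · rintro ⟨h00, h01, h10, h11, -, hinv⟩
    exact ⟨hU.2 ⟨h10, h11, h00, h01⟩, div_ne_zero hX (Nat.cast_ne_zero.2 hδ0), hinv⟩
  · rintro ⟨hΛ, -, hinv⟩
    have hdetX := (hdivδ _).1 (hdet ▸ hΛ.inZp_det hp)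
    obtain ⟨h10, h11, h00, h01⟩ := hU.1 hΛ
    exact ⟨h00, h01, h10, h11, hdetX, hinv⟩

lemma exists_atkinLehner_iff_forall_isAtkinLehnerAt (he : e ≠ 0) (hδ : δ ≠ 0) (hX : 0 < X.det) :
    (∃ a b c d : ℤ, X = !![(a : ℚ) * e, b; c * δ, d * e] ∧ X.det = e) ↔
      ∀ p : ℕ, p.Prime → IsAtkinLehnerAt p δ e X := by
  have heQ : (e : ℚ) ≠ 0 := Nat.cast_ne_zero.2 he
  have hδQ : (δ : ℚ) ≠ 0 := Nat.cast_ne_zero.2 hδ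
  constructor
  · rintro ⟨a, b, c, d, rfl, hdet⟩ p hp
    rw [IsAtkinLehnerAt, hdet, div_self heQ]
    simpa [heQ, hδQ] using
      ⟨inZp_intCast hp.ne_one a, inZp_intCast hp.ne_one b, inZp_intCast hp.ne_one c,
        inZp_intCast hp.ne_one d, inZp_intCast hp.ne_one 1⟩
  · intro h
    obtain ⟨a, ha⟩ := forall_inZp_iff.1 fun p hp => (h p hp).1
    obtain ⟨b, hb⟩ := forall_inZp_iff.1 fun p hp => (h p hp).2.1
    obtain ⟨c, hc⟩ := forall_inZp_iff.1 fun p hp => (h p hp).2.2.1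
    obtain ⟨d, hd⟩ := forall_inZp_iff.1 fun p hp => (h p hp).2.2.2.1
    obtain ⟨n, hn⟩ := forall_inZp_iff.1 fun p hp => (h p hp).2.2.2.2.1
    obtain ⟨k, hk⟩ := forall_inZp_iff.1 fun p hp => (h p hp).2.2.2.2.2
    have hnk : n * k = 1 := by
      have : X.det / e * (e / X.det) = 1 := by field_simp
      exact_mod_cast hn ▸ hk ▸ this
    have hn0 : (0 : ℚ) ≤ n := hn ▸ by positivity
    have hn1 : n = 1 := Int.eq_one_of_mul_eq_one_right (by exact_mod_cast hn0) hnk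
    refine ⟨a, b, c, d, ?_, ?_⟩
    · rw [Matrix.eta_fin_two X, ← hb, ← ha, ← hc, ← hd]
      simp [heQ, hδQ]
    · rwa [hn1, Int.cast_one, div_eq_one_iff_eq heQ] at hn

end AtkinLehner

/-- Local characterization of Atkin–Lehner elements: for `e` an exact divisor of `δ` and
`X ∈ GL₂⁺(ℚ)`, `X` is an Atkin–Lehner element associated to `e` (an integer matrix
`[[ae, b], [cδ, de]]` of determinant `e`) if and only if `X ∈ [[0,−1],[δ,0]]·Λ_p^×` for every
prime `p ∣ e` and `X ∈ Λ_p^×` for every prime `p ∤ e`. -/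
theorem stmt_14 (δ e : ℕ) (hδ : 0 < δ) (he : 0 < e) (hdvd : e ∣ δ)
    (hexact : Nat.gcd e (δ / e) = 1)
    (X : Matrix (Fin 2) (Fin 2) ℚ) (hdet : 0 < X.det) :
    (∃ a b c d : ℤ, X = !![(a : ℚ) * (e : ℚ), (b : ℚ); (c : ℚ) * (δ : ℚ), (d : ℚ) * (e : ℚ)] ∧
        X.det = (e : ℚ)) ↔
      ((∀ p : ℕ, p.Prime → p ∣ e →
          ∃ U : Matrix (Fin 2) (Fin 2) ℚ, inLambdaUnits p δ U ∧
            X = !![0, -1; (δ : ℚ), 0] * U) ∧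
        (∀ p : ℕ, p.Prime → ¬ p ∣ e → inLambdaUnits p δ X)) := by
  obtain ⟨m, hm⟩ := hdvd
  rw [hm, Nat.mul_div_cancel_left m he] at hexact
  have hpm {p : ℕ} (hp : p.Prime) (hpe : p ∣ e) : ¬ p ∣ m :=
    (Nat.Prime.coprime_iff_not_dvd hp).1 (Nat.Coprime.coprime_dvd_left hpe hexact)
  rw [exists_atkinLehner_iff_forall_isAtkinLehnerAt he.ne' hδ.ne' hdet]
  constructor
  · intro h
    exact ⟨fun p hp hpe => (isAtkinLehnerAt_iff_exists_inLambdaUnits hp hm hδ.ne' (hpm hp hpe)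
        hdet.ne').1 (h p hp),
      fun p hp hpe => (isAtkinLehnerAt_iff_inLambdaUnits hp hpe hδ.ne' hdet.ne').1 (h p hp)⟩
  · rintro ⟨hdiv, hndiv⟩ p hp
    by_cases hpe : p ∣ e
    · exact (isAtkinLehnerAt_iff_exists_inLambdaUnits hp hm hδ.ne' (hpm hp hpe) hdet.ne').2
        (hdiv p hp hpe)
    · exact (isAtkinLehnerAt_iff_inLambdaUnits hp hpe hδ.ne' hdet.ne').2 (hndiv p hp hpe)
end

section
/- Let G be a group freely generated by a family of involutions, G = ∗_{r∈R} ℤ/2ℤ. Let 𝒢 be the free group on symbols r̃ for r ∈ R, with the natural surjection 𝒢 → G sending r̃ to r. Then the kernel F of 𝒢 → G is a free group, freely generated by the elements w r̃² w⁻¹, where w ranges over all reduced words in the generators r̃ that contain no subword of the form r̃r̃ (square-free words). -/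
/-!
Square-free words are exactly the reduced words of the universal Coxeter group
`G = ∗_{r ∈ R} ℤ/2ℤ`, so they form a prefix-closed transversal of `F = ker (𝒢 → G)` in `𝒢`,
and the edges of the Cayley tree of `G` are the pairs `(w, r)` with `w r` square-free.

Let `𝒢` act on the right on pairs `(l, h)`, with `l` square-free and `h` in the free group on the
edges, by letting `r̃` toggle a final letter `r` of `l`, and multiply `h` by the edge `(w, r)` when
it deletes the final letter of `l = w r`. The map `(l, h) ↦ conjSq h * l` intertwines this action
with right multiplication on `𝒢`; and since `l` tracks the image in `G`, acting by `u ∈ F` on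
`([], 1)` gives a pair `([], h)` with `conjSq h = u`. Conversely `conjSq s` acts on `([], h)` by
`h ↦ h * s`, so `conjSq` is injective.
-/

open MulOpposite

theorem List.isChain_ne_append_singleton_iff {α : Type*} {l : List α} {a : α} :
    (l ++ [a]).IsChain (· ≠ ·) ↔ l.IsChain (· ≠ ·) ∧ l.getLast? ≠ some a := by
  simp only [List.isChain_append, List.isChain_singleton, List.head?_cons, Option.mem_def,
    Option.some.injEq, true_and]
  exact and_congr_right fun _ =>
    ⟨fun h e => h a e a rfl rfl, fun h _ e _ ha hb => h (by subst ha hb; exact e)⟩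

theorem FreeGroup.semiconj_unop_of_forall_of {α X Y : Type*}
    (ρ : FreeGroup α →* (Equiv.Perm X)ᵐᵒᵖ) (τ : FreeGroup α →* (Equiv.Perm Y)ᵐᵒᵖ) (Φ : X → Y)
    (h : ∀ a x, Φ ((ρ (of a)).unop x) = (τ (of a)).unop (Φ x)) (u : FreeGroup α) (x : X) :
    Φ ((ρ u).unop x) = (τ u).unop (Φ x) := by
  induction u using FreeGroup.induction_on generalizing x with
  | C1 => simp
  | of a => exact h a x
  | inv_of a _ =>
    rw [_root_.map_inv, _root_.map_inv, unop_inv, unop_inv, Equiv.Perm.eq_inv_iff_eq, ← h]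
    simp
  | mul u v hu hv =>
    simp only [_root_.map_mul, unop_mul, Equiv.Perm.mul_apply, hu, hv]

def mulRightPermHom (G : Type*) [Group G] : G →* (Equiv.Perm G)ᵐᵒᵖ where
  toFun g := op (Equiv.mulRight g)
  map_one' := unop_injective <| by ext; simp
  map_mul' g h := unop_injective <| by ext; simp [mul_assoc]

@[simp]
theorem mulRightPermHom_unop_apply {G : Type*} [Group G] (g x : G) :
    (mulRightPermHom G g).unop x = x * g :=
  rfl

namespace FreeGroup

variable {R : Type*}

def posWord (l : List R) : FreeGroup R :=
  (l.map of).prod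

@[simp]
theorem posWord_nil : posWord ([] : List R) = 1 :=
  rfl

@[simp]
theorem posWord_cons (a : R) (l : List R) : posWord (a :: l) = of a * posWord l := by
  simp [posWord]

@[simp]
theorem posWord_append (l l' : List R) : posWord (l ++ l') = posWord l * posWord l' := by
  simp [posWord]

end FreeGroup

abbrev UniversalCoxeter (R : Type*) := Monoid.CoprodI fun _ : R => Multiplicative (ZMod 2)

namespace UniversalCoxeter

variable {R : Type*}

def gen (r : R) : UniversalCoxeter R :=
  Monoid.CoprodI.of (M := fun _ : R => Multiplicative (ZMod 2)) (i := r) (.ofAdd 1)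

theorem gen_mul_self (r : R) : gen r * gen r = 1 := by
  rw [gen, ← map_mul]
  exact map_one _

def ofFreeGroup : FreeGroup R →* UniversalCoxeter R :=
  FreeGroup.lift gen

end UniversalCoxeter

open FreeGroup (of posWord)
open UniversalCoxeter

abbrev SquareFreeWord (R : Type*) := {l : List R // l.IsChain (· ≠ ·)}

namespace SquareFreeWord

variable {R : Type*}

def nil : SquareFreeWord R := ⟨[], List.isChain_nil⟩

def toWord (l : SquareFreeWord R) : Monoid.CoprodI.Word fun _ : R => Multiplicative (ZMod 2) where
  toList := l.1.map fun r => ⟨r, .ofAdd 1⟩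
  ne_one := by
    rintro _ h
    obtain ⟨r, -, rfl⟩ := List.mem_map.1 h
    show Multiplicative.ofAdd (1 : ZMod 2) ≠ 1
    decide
  chain_ne := (List.isChain_map _).2 l.2

theorem toWord_prod (l : SquareFreeWord R) : l.toWord.prod = ofFreeGroup (posWord l.1) := by
  simp [toWord, Monoid.CoprodI.Word.prod, posWord, ofFreeGroup, map_list_prod, Function.comp_def,
    gen]

theorem ofFreeGroup_posWord_injective :
    Function.Injective fun l : SquareFreeWord R => ofFreeGroup (posWord l.1) := by
  classical
  intro l l' h
  simp only [← toWord_prod] at h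
  have := congrArg Monoid.CoprodI.Word.toList (Monoid.CoprodI.Word.equiv.symm.injective h)
  exact Subtype.ext (List.map_injective_iff.2 (fun a b hab => congrArg Sigma.fst hab) this)

open Classical in
noncomputable def toggle (r : R) (l : SquareFreeWord R) : SquareFreeWord R :=
  if h : l.1.getLast? = some r then ⟨l.1.dropLast, l.2.dropLast⟩
  else ⟨l.1 ++ [r], List.isChain_ne_append_singleton_iff.2 ⟨l.2, h⟩⟩

theorem toggle_of_getLast? {r : R} {l : SquareFreeWord R} (h : l.1.getLast? = some r) :
    toggle r l = ⟨l.1.dropLast, l.2.dropLast⟩ :=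
  dif_pos h

theorem toggle_of_not_getLast? {r : R} {l : SquareFreeWord R} (h : l.1.getLast? ≠ some r) :
    toggle r l = ⟨l.1 ++ [r], List.isChain_ne_append_singleton_iff.2 ⟨l.2, h⟩⟩ :=
  dif_neg h

theorem toggle_involutive (r : R) : Function.Involutive (toggle r) := by
  intro l
  by_cases h : l.1.getLast? = some r
  · have hl := List.dropLast_append_getLast? r h
    have hchain := l.2
    rw [← hl] at hchain
    rw [toggle_of_getLast? h,
      toggle_of_not_getLast? (List.isChain_ne_append_singleton_iff.1 hchain).2]
    exact Subtype.ext hl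
  · rw [toggle_of_not_getLast? h, toggle_of_getLast? (by simp)]
    exact Subtype.ext List.dropLast_concat

end SquareFreeWord

abbrev SquareFreeEdge (R : Type*) := {x : List R × R // (x.1 ++ [x.2]).IsChain (· ≠ ·)}

def conjSq {R : Type*} : FreeGroup (SquareFreeEdge R) →* FreeGroup R :=
  FreeGroup.lift fun x => posWord x.1.1 * of x.1.2 * of x.1.2 * (posWord x.1.1)⁻¹

theorem ofFreeGroup_conjSq {R : Type*} (s : FreeGroup (SquareFreeEdge R)) :
    ofFreeGroup (conjSq s) = 1 := by
  suffices ofFreeGroup.comp conjSq = (1 : FreeGroup (SquareFreeEdge R) →* UniversalCoxeter R) from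
    DFunLike.congr_fun this s
  refine FreeGroup.ext_hom _ _ fun x => ?_
  simp only [conjSq, ofFreeGroup, MonoidHom.comp_apply, FreeGroup.lift_apply_of, map_mul, map_inv,
    MonoidHom.one_apply]
  rw [mul_assoc _ (gen _) (gen _), gen_mul_self, mul_one, mul_inv_cancel]

namespace Schreier

open SquareFreeWord

variable {R : Type*}

abbrev State (R : Type*) := SquareFreeWord R × FreeGroup (SquareFreeEdge R)

open Classical in
noncomputable def cocycle (r : R) (l : SquareFreeWord R) : FreeGroup (SquareFreeEdge R) :=
  if h : l.1.getLast? = some r then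
    of ⟨(l.1.dropLast, r), by rw [List.dropLast_append_getLast? r h]; exact l.2⟩
  else 1

noncomputable def step (r : R) : Equiv.Perm (State R) :=
  Equiv.prodShear (toggle_involutive r).toPerm fun l => Equiv.mulRight (cocycle r l)

noncomputable def action : FreeGroup R →* (Equiv.Perm (State R))ᵐᵒᵖ :=
  FreeGroup.lift fun r => op (step r)

theorem action_of_unop_apply (r : R) (p : State R) :
    (action (of r)).unop p = (toggle r p.1, p.2 * cocycle r p.1) :=
  rfl

theorem action_posWord (w : List R) (l : SquareFreeWord R) (hw : (l.1 ++ w).IsChain (· ≠ ·))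
    (h : FreeGroup (SquareFreeEdge R)) :
    (action (posWord w)).unop (l, h) = (⟨l.1 ++ w, hw⟩, h) := by
  induction w generalizing l with
  | nil => simp
  | cons a w ih =>
    rw [← List.singleton_append, ← List.append_assoc] at hw
    have ha := (List.isChain_ne_append_singleton_iff.1 hw.left_of_append).2
    rw [FreeGroup.posWord_cons, map_mul, unop_mul, Equiv.Perm.mul_apply, action_of_unop_apply,
      toggle_of_not_getLast? ha, cocycle, dif_neg ha, mul_one, ih _ hw]
    simp

theorem action_of_of_isChain_append {l : SquareFreeWord R} {r : R}
    (hlr : (l.1 ++ [r]).IsChain (· ≠ ·)) (h : FreeGroup (SquareFreeEdge R)) :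
    (action (of r)).unop (l, h) = (⟨l.1 ++ [r], hlr⟩, h) := by
  simpa using action_posWord [r] l hlr h

theorem action_of_append_singleton {w : List R} {r : R} (hw : (w ++ [r]).IsChain (· ≠ ·))
    (h : FreeGroup (SquareFreeEdge R)) :
    (action (of r)).unop (⟨w ++ [r], hw⟩, h) =
      (⟨w, hw.left_of_append⟩, h * of ⟨(w, r), hw⟩) := by
  have hlast : (w ++ [r]).getLast? = some r := by simp
  rw [action_of_unop_apply, toggle_of_getLast? hlast, cocycle, dif_pos hlast]
  congr <;> simp

def eval (p : State R) : FreeGroup R :=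
  conjSq p.2 * posWord p.1.1

theorem eval_action_of (r : R) (p : State R) :
    eval ((action (of r)).unop p) = eval p * of r := by
  obtain ⟨⟨l, hl⟩, h⟩ := p
  by_cases hr : l.getLast? = some r
  · obtain ⟨w, rfl⟩ : ∃ w, l = w ++ [r] := ⟨_, (List.dropLast_append_getLast? r hr).symm⟩
    rw [action_of_append_singleton]
    simp [eval, conjSq]
    group
  · rw [action_of_of_isChain_append (List.isChain_ne_append_singleton_iff.2 ⟨hl, hr⟩)]
    simp [eval, mul_assoc]

theorem eval_action (u : FreeGroup R) (p : State R) :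
    eval ((action u).unop p) = eval p * u :=
  FreeGroup.semiconj_unop_of_forall_of action (mulRightPermHom _) eval eval_action_of u p

theorem action_conjSq (s h : FreeGroup (SquareFreeEdge R)) :
    (action (conjSq s)).unop (nil, h) = (nil, h * s) := by
  refine FreeGroup.semiconj_unop_of_forall_of (mulRightPermHom _) (action.comp conjSq) (nil, ·)
    (fun x h => ?_) s h |>.symm
  obtain ⟨⟨w, r⟩, hx⟩ := x
  have hwr : (w ++ [r]).IsChain (· ≠ ·) := hx
  have hw : (action (posWord w)).unop (nil, h) = (⟨w, hwr.left_of_append⟩, h) ∧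
      (action (posWord w)).unop (nil, h * of ⟨(w, r), hwr⟩) =
        (⟨w, hwr.left_of_append⟩, h * of ⟨(w, r), hwr⟩) :=
    ⟨action_posWord w nil _ h, action_posWord w nil _ _⟩
  simp only [MonoidHom.comp_apply, conjSq, FreeGroup.lift_apply_of, map_mul, map_inv, unop_mul,
    unop_inv, Equiv.Perm.mul_apply, mulRightPermHom_unop_apply]
  rw [Equiv.Perm.eq_inv_iff_eq, hw.1, hw.2,
    action_of_of_isChain_append (l := ⟨w, hwr.left_of_append⟩) hwr, action_of_append_singleton]

end Schreier

open SquareFreeWord Schreier in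
/-- Let `G = ∗_{r∈R} ℤ/2ℤ` be the free product of copies of `ℤ/2ℤ` indexed by `R`, let `𝒢` be
the free group on symbols `r̃` for `r ∈ R`, and let `π : 𝒢 → G` be the natural surjection.
Then the kernel `F` of `π` is a free group, freely generated by the elements `w r̃² w⁻¹` where
`w` ranges over the square-free positive words in the generators `r̃` such that `w r̃` is still
square-free (encoded by pairs `(w, r)` with `List.Chain' (· ≠ ·) (w ++ [r])`): the induced
homomorphism from the free group on these pairs is injective with image `ker π`. -/
theorem stmt_17 (R : Type*)
    (π : FreeGroup R →* Monoid.CoprodI (fun _ : R => Multiplicative (ZMod 2)))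
    (hπ : π = FreeGroup.lift (fun r =>
      Monoid.CoprodI.of (M := fun _ : R => Multiplicative (ZMod 2)) (i := r)
        (Multiplicative.ofAdd (1 : ZMod 2))))
    (f : FreeGroup {x : List R × R // List.Chain' (· ≠ ·) (x.1 ++ [x.2])} →* FreeGroup R)
    (hf : f = FreeGroup.lift (fun x =>
      (List.map FreeGroup.of x.1.1).prod * FreeGroup.of x.1.2 * FreeGroup.of x.1.2 *
        ((List.map FreeGroup.of x.1.1).prod)⁻¹)) :
    Function.Injective f ∧ f.range = π.ker := by
  obtain rfl : π = ofFreeGroup := hπ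
  obtain rfl : f = conjSq := hf
  change Function.Injective (conjSq (R := R)) ∧ (conjSq (R := R)).range = ofFreeGroup.ker
  refine ⟨fun s t hst => ?_, le_antisymm ?_ fun u hu => ?_⟩
  · have h := action_conjSq s 1
    rw [hst, action_conjSq] at h
    simpa using (congrArg Prod.snd h).symm
  · rintro _ ⟨s, rfl⟩
    exact ofFreeGroup_conjSq s
  · have hp := eval_action u (nil, 1)
    generalize (action u).unop (nil, 1) = p at hp
    simp only [eval, nil, map_one, FreeGroup.posWord_nil, one_mul] at hp
    have hnil : p.1 = nil := ofFreeGroup_posWord_injective <| by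
      rw [← hp] at hu
      simpa [ofFreeGroup_conjSq, nil] using hu
    exact ⟨p.2, by simpa [hnil, nil] using hp⟩
end

section
/- Let (G_i)_{i∈I} be groups with normal subgroups H_i ⊴ G_i, let A_i ⊆ G_i be sets of right coset representatives for H_i, and extend the induced set-theoretic sections G_i/H_i → G_i to a section φ: ∗_i (G_i/H_i) → ∗_i G_i of the canonical quotient of free products. Then the kernel of ∗_i G_i → ∗_i (G_i/H_i) is generated by the elements φ(u) h φ(u)⁻¹ for u ∈ ∗_i (G_i/H_i), i ∈ I, and h ∈ H_i. -/
/-!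
Let `K` be the subgroup generated by the conjugates `φ(u) h φ(u)⁻¹`. Since `π ∘ φ = id`, `K` lies
in the kernel, and `K` contains each `h ∈ Hᵢ` (take `u = 1`). The key computation: for `m ∈ Gᵢ`
the normal forms of `u` and `π(m) u` differ only in their first letter, so
`m φ(u) φ(π(m) u)⁻¹` lies in `Hᵢ ⊆ K`. Hence `K` is normalised by every letter, and induction on
the length of `g` gives `g φ(π g)⁻¹ ∈ K`; for `g` in the kernel, `φ(π g) = φ 1 = 1`.
-/

namespace Monoid.CoprodI

variable {ι : Type*} {G : ι → Type*} [∀ i, Group (G i)]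

section QuotientMap

variable (H : ∀ i, Subgroup (G i)) [∀ i, (H i).Normal]

def quotientMap : CoprodI G →* CoprodI fun i => G i ⧸ H i :=
  lift fun i => of.comp (QuotientGroup.mk' (H i))

@[simp]
theorem quotientMap_of {i : ι} (m : G i) :
    quotientMap H (of m) = of (M := fun i => G i ⧸ H i) (m : G i ⧸ H i) :=
  lift_of _ _

end QuotientMap

variable {H : ∀ i, Subgroup (G i)} [∀ i, (H i).Normal] (σ : ∀ i, G i ⧸ H i → G i)

def Word.liftSection (w : Word fun i => G i ⧸ H i) : CoprodI G :=
  (w.toList.map fun p => of (σ p.1 p.2)).prod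

theorem Word.liftSection_cons {i : ι} (m : G i ⧸ H i) (w : Word fun i => G i ⧸ H i)
    (hmw : w.fstIdx ≠ some i) (h1 : m ≠ 1) :
    (cons (M := fun i => G i ⧸ H i) m w hmw h1).liftSection σ =
      of (σ i m) * w.liftSection σ := by
  simp [liftSection, cons]

variable [∀ i, DecidableEq (G i ⧸ H i)]

/-- The correction `e` is needed because `rcons` drops a trivial head, while `σ i 1` need not
be `1`. -/
theorem Word.exists_liftSection_rcons (hσ : ∀ i (x : G i ⧸ H i), (σ i x : G i ⧸ H i) = x)
    {i : ι} (p : Pair (fun i => G i ⧸ H i) i) :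
    ∃ e ∈ H i, (rcons p).liftSection σ = of (σ i p.head * e) * p.tail.liftSection σ := by
  by_cases h1 : p.head = 1
  · refine ⟨(σ i 1)⁻¹, inv_mem ((QuotientGroup.eq_one_iff _).mp (hσ i 1)), ?_⟩
    rw [show rcons p = p.tail from dif_pos h1, h1, mul_inv_cancel, map_one, one_mul]
  · refine ⟨1, one_mem _, ?_⟩
    rw [show rcons p = cons (M := fun i => G i ⧸ H i) p.head p.tail p.fstIdx_ne h1 from
      dif_neg h1, liftSection_cons, mul_one]

variable [DecidableEq ι]

def liftSection (u : CoprodI fun i => G i ⧸ H i) : CoprodI G :=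
  (Word.equiv u).liftSection σ

@[simp]
theorem liftSection_one : liftSection σ 1 = 1 := by
  have hempty : Word.equiv (1 : CoprodI fun i => G i ⧸ H i) = Word.empty :=
    (Equiv.eq_symm_apply _).mp Word.prod_empty.symm
  rw [liftSection, hempty]
  rfl

theorem quotientMap_liftSection (hσ : ∀ i (x : G i ⧸ H i), (σ i x : G i ⧸ H i) = x)
    (u : CoprodI fun i => G i ⧸ H i) : quotientMap H (liftSection σ u) = u := by
  rw [liftSection, Word.liftSection, map_list_prod, List.map_map]
  have hc : (quotientMap H ∘ fun p : Σ i, G i ⧸ H i => of (σ p.1 p.2)) = fun p => of p.2 := by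
    funext p
    simp [hσ]
  rw [hc]
  exact Word.equiv.symm_apply_apply u

def sectionConjugatesClosure : Subgroup (CoprodI G) :=
  Subgroup.closure {x | ∃ (u : CoprodI fun i => G i ⧸ H i) (i : ι) (h : G i),
    h ∈ H i ∧ x = liftSection σ u * of h * (liftSection σ u)⁻¹}

theorem of_mem_sectionConjugatesClosure {i : ι} {h : G i} (hh : h ∈ H i) :
    of h ∈ sectionConjugatesClosure σ := by
  have h1 : liftSection σ 1 * of h * (liftSection σ 1)⁻¹ ∈ sectionConjugatesClosure σ :=
    Subgroup.subset_closure ⟨1, i, h, hh, rfl⟩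
  simpa using h1

variable {σ} (hσ : ∀ i (x : G i ⧸ H i), (σ i x : G i ⧸ H i) = x)
include hσ

theorem of_mul_liftSection_mul_inv_mem {i : ι} (m : G i) (u : CoprodI fun i => G i ⧸ H i) :
    of m * liftSection σ u * (liftSection σ (quotientMap H (of m) * u))⁻¹ ∈
      sectionConjugatesClosure σ := by
  rw [quotientMap_of]
  set x : G i ⧸ H i := (m : G i ⧸ H i)
  set p := Word.equivPair i (Word.equiv u)
  have hu : Word.equiv u = Word.rcons p := ((Word.equivPair i).symm_apply_apply _).symm
  set q : Word.Pair (fun i => G i ⧸ H i) i := ⟨x * p.head, p.tail, p.fstIdx_ne⟩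
  have hxu : Word.equiv (of (M := fun i => G i ⧸ H i) x * u) = Word.rcons q :=
    (mul_smul (of (M := fun i => G i ⧸ H i) x) u (Word.empty (M := fun i => G i ⧸ H i))).trans
      (Word.of_smul_def i (Word.equiv u) x)
  obtain ⟨e₁, he₁, h₁⟩ := Word.exists_liftSection_rcons σ hσ p
  obtain ⟨e₂, he₂, h₂⟩ := Word.exists_liftSection_rcons σ hσ q
  rw [liftSection, liftSection, hu, hxu, h₁, h₂]
  have hcancel : ∀ (a b : G i) (t : CoprodI G),
      of m * (of a * t) * (of b * t)⁻¹ = of (m * a * b⁻¹) := by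
    intro a b t
    simp only [map_mul, map_inv]
    group
  rw [hcancel]
  apply of_mem_sectionConjugatesClosure
  rw [← QuotientGroup.eq_one_iff]
  simp only [QuotientGroup.mk_mul, QuotientGroup.mk_inv, hσ,
    (QuotientGroup.eq_one_iff _).mpr he₁, (QuotientGroup.eq_one_iff _).mpr he₂, q, x]
  group

theorem of_mul_mul_inv_of_mem {i : ι} (m : G i) {k : CoprodI G}
    (hk : k ∈ sectionConjugatesClosure σ) :
    of m * k * (of m)⁻¹ ∈ sectionConjugatesClosure σ := by
  suffices sectionConjugatesClosure σ ≤
      (sectionConjugatesClosure σ).comap (MulAut.conj (of m)).toMonoidHom from this hk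
  refine Subgroup.closure_le _ |>.mpr ?_
  rintro _ ⟨u, j, h, hh, rfl⟩
  have hc := of_mul_liftSection_mul_inv_mem hσ m u
  have hv : liftSection σ (quotientMap H (of m) * u) * of h *
      (liftSection σ (quotientMap H (of m) * u))⁻¹ ∈ sectionConjugatesClosure σ :=
    Subgroup.subset_closure ⟨_, j, h, hh, rfl⟩
  have := Subgroup.mul_mem _ (Subgroup.mul_mem _ hc hv) (Subgroup.inv_mem _ hc)
  simp only [SetLike.mem_coe, Subgroup.mem_comap, MulEquiv.coe_toMonoidHom, MulAut.conj_apply]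
  convert this using 1
  group

theorem mul_inv_liftSection_quotientMap_mem (g : CoprodI G) :
    g * (liftSection σ (quotientMap H g))⁻¹ ∈ sectionConjugatesClosure σ := by
  induction g using induction_left with
  | one => simp
  | mul m x ih =>
    rw [map_mul]
    have := Subgroup.mul_mem _ (of_mul_mul_inv_of_mem hσ m ih)
      (of_mul_liftSection_mul_inv_mem hσ m (quotientMap H x))
    convert this using 1
    group

theorem ker_quotientMap : (quotientMap H).ker = sectionConjugatesClosure σ := by
  apply le_antisymm
  · intro g hg
    simpa [MonoidHom.mem_ker.mp hg] using mul_inv_liftSection_quotientMap_mem hσ g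
  · refine Subgroup.closure_le _ |>.mpr ?_
    rintro _ ⟨u, i, h, hh, rfl⟩
    simp [quotientMap_liftSection σ hσ, (QuotientGroup.eq_one_iff h).mpr hh]

end Monoid.CoprodI

/-- Let `(Gᵢ)` be groups with normal subgroups `Hᵢ ⊴ Gᵢ`, let `σᵢ : Gᵢ/Hᵢ → Gᵢ` be
set-theoretic sections of the quotient maps (choices of coset representatives), and let
`φ : ∗ᵢ (Gᵢ/Hᵢ) → ∗ᵢ Gᵢ` be the section of the canonical projection `π` obtained by applying
the `σᵢ` letterwise to the normal form (reduced word) of an element.  Then the kernel of `π`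
is generated by the elements `φ(u) h φ(u)⁻¹` for `u ∈ ∗ᵢ (Gᵢ/Hᵢ)`, `i`, and `h ∈ Hᵢ`. -/
theorem stmt_18 {ι : Type*} [DecidableEq ι] (G : ι → Type*) [∀ i, Group (G i)]
    (H : ∀ i, Subgroup (G i)) [∀ i, (H i).Normal]
    [∀ i, DecidableEq (G i ⧸ H i)]
    (σ : ∀ i, G i ⧸ H i → G i)
    (hσ : ∀ i (x : G i ⧸ H i), QuotientGroup.mk' (H i) (σ i x) = x)
    (π : Monoid.CoprodI G →* Monoid.CoprodI (fun i => G i ⧸ H i))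
    (hπ : π = Monoid.CoprodI.lift
      (fun i => (Monoid.CoprodI.of (M := fun i => G i ⧸ H i)).comp (QuotientGroup.mk' (H i))))
    (φ : Monoid.CoprodI (fun i => G i ⧸ H i) → Monoid.CoprodI G)
    (hφ : ∀ u, φ u =
      (((Monoid.CoprodI.Word.equiv u).toList.map
        (fun p : Σ i, G i ⧸ H i => Monoid.CoprodI.of (σ p.1 p.2))).prod)) :
    π.ker = Subgroup.closure
      {x : Monoid.CoprodI G | ∃ (u : Monoid.CoprodI (fun i => G i ⧸ H i)) (i : ι) (h : G i),
        h ∈ H i ∧ x = φ u * Monoid.CoprodI.of h * (φ u)⁻¹} := by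
  subst hπ
  obtain rfl : φ = Monoid.CoprodI.liftSection σ := funext hφ
  exact Monoid.CoprodI.ker_quotientMap hσ
end

section
/- Let G be a group isomorphic to the free product ℤ/2ℤ ∗ ℤ/4ℤ with generators s (of order 2) and u (of order 4), so that u⁴ = 1, and let π: G → ℤ/4ℤ be the homomorphism sending s ↦ 0 and u ↦ 1. Then the kernel K = ker π has index 4 in G and K ≅ (ℤ/2ℤ)^{∗4}, freely generated (as a free product of cyclic groups of order 2) by the involutions s, u s u⁻¹, u² s u⁻², and u³ s u⁻³. -/
open Monoid Multiplicative Monoid.CoprodI Monoid.CoprodI.Word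

namespace Stmt19Aux

abbrev G' := Monoid.Coprod (Multiplicative (ZMod 2)) (Multiplicative (ZMod 4))

abbrev F : Bool → Type := fun b => Multiplicative (ZMod (cond b 4 2))

abbrev aL : F false := ofAdd (1 : ZMod 2)
abbrev β (a : ZMod 4) : F true := ofAdd a

def ψ : G' →* Monoid.CoprodI F :=
  Monoid.Coprod.lift (Monoid.CoprodI.of (M := F) (i := false)) (Monoid.CoprodI.of (M := F) (i := true))

noncomputable instance : MulAction G' (Word F) := MulAction.compHom _ ψ

lemma g_smul_def (g : G') (w : Word F) : g • w = ψ g • w := rfl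

lemma aL_ne_one : aL ≠ 1 := by decide

lemma beta_ne_one {a : ZMod 4} (ha : a ≠ 0) : β a ≠ 1 := by
  simpa [β] using ha

lemma toList_of_smul {i : Bool} (m : F i) (hm : m ≠ 1) (v : Word F) (hv : v.fstIdx ≠ some i) :
    (CoprodI.of m • v).toList = ⟨i, m⟩ :: v.toList := by
  rw [← Word.cons_eq_smul (h1 := hv) (h2 := hm)]
  rfl

lemma fstIdx_of_smul {i : Bool} (m : F i) (hm : m ≠ 1) (v : Word F) (hv : v.fstIdx ≠ some i) :
    (CoprodI.of m • v).fstIdx = some i := by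
  rw [Word.fstIdx, toList_of_smul m hm v hv]
  rfl

/-- The ping-pong sets. -/
def X (a : ZMod 4) : Set (Word F) :=
  {w | ∃ v : Word F, v.fstIdx ≠ some false ∧ w = CoprodI.of (β a) • (CoprodI.of aL • v)}

def lead (w : Word F) : Option (ZMod 4) :=
  match w.toList with
  | ⟨false, _⟩ :: _ => some 0
  | ⟨true, x⟩ :: ⟨false, _⟩ :: _ => some (toAdd x)
  | _ => none

lemma lead_mem_X {a : ZMod 4} {w : Word F} (h : w ∈ X a) : lead w = some a := by
  obtain ⟨v, hv, rfl⟩ := h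
  have h1 : (CoprodI.of aL • v).toList = ⟨false, aL⟩ :: v.toList :=
    toList_of_smul aL aL_ne_one v hv
  by_cases ha : a = 0
  · subst ha
    have hone : (CoprodI.of (β 0) : CoprodI F) = 1 := by
      rw [show β 0 = 1 from rfl, map_one]
    rw [hone, one_smul, lead, h1]
  · have hf : (CoprodI.of aL • v).fstIdx ≠ some true := by
      rw [fstIdx_of_smul aL aL_ne_one v hv]; simp
    have h2 : (CoprodI.of (β a) • (CoprodI.of aL • v)).toList
        = ⟨true, β a⟩ :: ⟨false, aL⟩ :: v.toList := by
      rw [toList_of_smul (β a) (beta_ne_one ha) _ hf, h1]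
    rw [lead, h2]
    simp [β]

lemma X_disjoint {a b : ZMod 4} (hab : a ≠ b) : Disjoint (X a) (X b) := by
  rw [Set.disjoint_left]
  intro w hwa hwb
  have h1 := lead_mem_X hwa
  rw [lead_mem_X hwb] at h1
  exact hab (Option.some_inj.mp h1).symm

lemma X_nonempty (a : ZMod 4) : (X a).Nonempty :=
  ⟨_, Word.empty, by simp [Word.fstIdx, Word.empty], rfl⟩

lemma key_pp {a b : ZMod 4} (hab : a ≠ b) {w : Word F} (hw : w ∈ X b) :
    (CoprodI.of (β a) * CoprodI.of aL * (CoprodI.of (β a))⁻¹) • w ∈ X a := by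
  obtain ⟨v, hv, rfl⟩ := hw
  have hfst : (CoprodI.of aL • v).fstIdx = some false := fstIdx_of_smul aL aL_ne_one v hv
  have hba : b - a ≠ 0 := sub_ne_zero.mpr (Ne.symm hab)
  refine ⟨CoprodI.of (β (b - a)) • (CoprodI.of aL • v), ?_, ?_⟩
  · rw [fstIdx_of_smul (β (b - a)) (beta_ne_one hba) _ (by rw [hfst]; simp)]
    simp
  · have hmul : (CoprodI.of (β a) : CoprodI F)⁻¹ * CoprodI.of (β b) = CoprodI.of (β (b - a)) := by
      rw [← map_inv, ← map_mul]
      congr 1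
      show (ofAdd a)⁻¹ * ofAdd b = ofAdd (b - a)
      rw [← ofAdd_neg, ← ofAdd_add, neg_add_eq_sub]
    rw [mul_smul, mul_smul, ← mul_smul ((CoprodI.of (β a))⁻¹) (CoprodI.of (β b)), hmul]

end Stmt19Aux
open Stmt19Aux Subgroup

/-- Let `G = ℤ/2ℤ ∗ ℤ/4ℤ` (free product) with `s` the generator of order `2` and `u` the
generator of order `4`, and let `π : G → ℤ/4ℤ` be the homomorphism with `π(s) = 0`,
`π(u) = 1`.  Then `K = ker π` has index `4` in `G`, and `K` is the internal free product of
the four order-two subgroups generated by the involutions `uᵏ s u⁻ᵏ`, `k = 0, 1, 2, 3`: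
the canonical map from the external free product of these four subgroups is injective with
range `ker π`. -/
theorem stmt_19
    (s u : Monoid.Coprod (Multiplicative (ZMod 2)) (Multiplicative (ZMod 4)))
    (hs : s = Monoid.Coprod.inl (Multiplicative.ofAdd (1 : ZMod 2)))
    (hu : u = Monoid.Coprod.inr (Multiplicative.ofAdd (1 : ZMod 4)))
    (π : Monoid.Coprod (Multiplicative (ZMod 2)) (Multiplicative (ZMod 4)) →*
      Multiplicative (ZMod 4))
    (hπ : π = Monoid.Coprod.lift 1 (MonoidHom.id (Multiplicative (ZMod 4)))) :
    π.ker.index = 4 ∧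
    (∀ k : Fin 4, orderOf (u ^ (k : ℕ) * s * (u ^ (k : ℕ))⁻¹) = 2) ∧
    Function.Injective
      (Monoid.CoprodI.lift
        (fun k : Fin 4 => (Subgroup.zpowers (u ^ (k : ℕ) * s * (u ^ (k : ℕ))⁻¹)).subtype)) ∧
    (Monoid.CoprodI.lift
        (fun k : Fin 4 => (Subgroup.zpowers (u ^ (k : ℕ) * s * (u ^ (k : ℕ))⁻¹)).subtype)).range
      = π.ker := by
  -- basic computations
  have hs2 : s * s = 1 := by
    rw [hs, ← map_mul, show (ofAdd (1 : ZMod 2)) * ofAdd 1 = 1 by decide, map_one]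
  have hsne : s ≠ 1 := by
    intro h
    have := congrArg Monoid.Coprod.fst h
    rw [hs] at this
    simp only [Monoid.Coprod.fst_apply_inl, map_one] at this
    exact absurd this (by decide)
  have hu4 : u ^ 4 = 1 := by
    rw [hu, ← map_pow, show (ofAdd (1 : ZMod 4)) ^ 4 = 1 by decide, map_one]
  have hpow1 : ∀ n : ℕ, (ofAdd (1 : ZMod 4)) ^ n = ofAdd ((n : ZMod 4)) := by
    intro n
    induction n with
    | zero => simp
    | succ n ih => rw [pow_succ, ih, ← ofAdd_add]; push_cast; ring_nf
  have hπu : ∀ n : ℕ, π (u ^ n) = ofAdd ((n : ZMod 4)) := by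
    intro n
    rw [map_pow, hπ, hu, Monoid.Coprod.lift_apply_inr]
    simpa using hpow1 n
  have hπs : π s = 1 := by
    rw [hπ, hs, Monoid.Coprod.lift_apply_inl]; rfl
  -- conjugates
  set t : Fin 4 → _ := fun k : Fin 4 => u ^ (k : ℕ) * s * (u ^ (k : ℕ))⁻¹ with ht
  have ht2 : ∀ k, t k * t k = 1 := by
    intro k
    have h2 : t k * t k = u ^ (k : ℕ) * (s * s) * (u ^ (k : ℕ))⁻¹ := by rw [ht]; group
    rw [hs2, mul_one, mul_inv_cancel] at h2
    exact h2
  have htne : ∀ k, t k ≠ 1 := by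
    intro k h
    apply hsne
    have h1 : u ^ (k : ℕ) * s = u ^ (k : ℕ) := mul_inv_eq_one.mp h
    exact mul_left_cancel (a := u ^ (k : ℕ)) (by rw [h1, mul_one])
  have htπ : ∀ k, π (t k) = 1 := by
    intro k
    rw [ht]
    simp [map_mul, map_inv, hπs, hπu]
  -- the map ψ
  have hψu : ∀ n : ℕ, ψ (u ^ n) = CoprodI.of (β ((n : ZMod 4))) := by
    intro n
    rw [map_pow, hu, ψ, Monoid.Coprod.lift_apply_inr, ← map_pow]
    exact congrArg _ (hpow1 n)
  have hψs : ψ s = CoprodI.of aL := by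
    rw [hs, ψ, Monoid.Coprod.lift_apply_inl]
  set κ : Fin 4 → ZMod 4 := fun k => ((k : ℕ) : ZMod 4) with hκ
  have hκinj : Function.Injective κ := by
    intro j k h
    have := congrArg ZMod.val h
    rw [hκ] at this
    simp only [ZMod.val_cast_of_lt j.isLt, ZMod.val_cast_of_lt k.isLt] at this
    exact Fin.ext this
  have hψt : ∀ k, ψ (t k) = CoprodI.of (β (κ k)) * CoprodI.of aL * (CoprodI.of (β (κ k)))⁻¹ := by
    intro k
    rw [ht]
    simp only [map_mul, map_inv, hψu, hψs, hκ]
  -- members of zpowers (t k)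
  have hmem : ∀ (k : Fin 4) (h : (zpowers (t k))), h ≠ 1 → (h : _) = t k := by
    intro k h hne
    obtain ⟨z, hz⟩ := mem_zpowers_iff.mp h.2
    have ht2' : t k ^ (2 : ℤ) = 1 := by rw [zpow_two, ht2]
    rcases Int.even_or_odd z with ⟨m, hm⟩ | ⟨m, hm⟩
    · exfalso
      apply hne
      have : t k ^ z = 1 := by
        rw [hm, ← two_mul, zpow_mul, ht2', one_zpow]
      rw [this] at hz
      exact (OneMemClass.coe_eq_one.mp hz.symm)
    · have : t k ^ z = t k := by
        rw [hm, zpow_add, zpow_mul, ht2', one_zpow, one_mul, zpow_one]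
      rw [← hz, this]
  constructor
  · -- index
    rw [Subgroup.index_ker]
    have hsurj : Function.Surjective π := by
      intro y
      exact ⟨Monoid.Coprod.inr y, by rw [hπ, Monoid.Coprod.lift_apply_inr]; rfl⟩
    rw [MonoidHom.range_eq_top.mpr hsurj]
    rw [Subgroup.card_top]
    rw [Nat.card_congr Multiplicative.toAdd, Nat.card_zmod]
  refine ⟨?_, ?_, ?_⟩
  · -- order
    intro k
    have : Fact (Nat.Prime 2) := ⟨Nat.prime_two⟩
    refine orderOf_eq_prime ?_ (htne k)
    rw [pow_two]; exact ht2 k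
  · -- injectivity via ping pong
    apply Monoid.CoprodI.lift_injective_of_ping_pong _ (Or.inl (by simp; norm_num))
      (fun k : Fin 4 => X (κ k)) (fun k => X_nonempty (κ k))
      (fun j k hjk => X_disjoint (fun h => hjk (hκinj h)))
    intro k j hkj h hne
    rw [show ((zpowers (t k)).subtype h : _) = t k from hmem k h hne]
    intro x hx
    obtain ⟨y, hy, rfl⟩ := hx
    show (t k) • y ∈ X (κ k)
    rw [g_smul_def, hψt k]
    exact key_pp (fun h' => hkj (hκinj h')) hy
  · -- range = kernel
    have hrange : (Monoid.CoprodI.lift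
        (fun k : Fin 4 => (Subgroup.zpowers (t k)).subtype)).range
        = ⨆ k : Fin 4, zpowers (t k) := by
      rw [Monoid.CoprodI.range_eq_iSup]
      simp only [Subgroup.range_subtype]
    set K := ⨆ k : Fin 4, zpowers (t k) with hK
    have hKker : K ≤ π.ker := by
      refine iSup_le fun k => (zpowers_le).mpr ?_
      exact htπ k
    have hpow_mod : ∀ a : ℕ, u ^ a = u ^ (a % 4) := by
      intro a
      conv_lhs => rw [← Nat.div_add_mod a 4]
      rw [pow_add, pow_mul, hu4, one_pow, one_mul]
    have htK : ∀ a : ℕ, u ^ a * s * (u ^ a)⁻¹ ∈ K := by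
      intro a
      have hlt : a % 4 < 4 := Nat.mod_lt _ (by norm_num)
      refine Subgroup.mem_iSup_of_mem (⟨a % 4, hlt⟩ : Fin 4) ?_
      rw [hpow_mod a]
      exact mem_zpowers _
    have hsK : s ∈ K := by simpa using htK 0
    have hstep : ∀ x ∈ K, u * x * u⁻¹ ∈ K := by
      intro x hx
      refine Subgroup.iSup_induction _ (C := fun x => u * x * u⁻¹ ∈ K) hx
        (fun k y hy => ?_) (by simpa using one_mem K) (fun y z hy hz => ?_)
      · obtain ⟨z, rfl⟩ := mem_zpowers_iff.mp hy
        have h1 : u * t k * u⁻¹ = u ^ ((k : ℕ) + 1) * s * (u ^ ((k : ℕ) + 1))⁻¹ := by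
          simp only [ht]; group
        have h2 : u * t k ^ z * u⁻¹ = (u * t k * u⁻¹) ^ z := conj_zpow.symm
        rw [h2, h1]
        exact zpow_mem (htK _) z
      · show u * (y * z) * u⁻¹ ∈ K
        have heq : u * (y * z) * u⁻¹ = (u * y * u⁻¹) * (u * z * u⁻¹) := by group
        rw [heq]
        exact mul_mem hy hz
    have hconj : ∀ (a : ℕ), ∀ x ∈ K, u ^ a * x * (u ^ a)⁻¹ ∈ K := by
      intro a
      induction a with
      | zero => intro x hx; simpa using hx
      | succ a ih =>
        intro x hx
        have : u ^ (a + 1) * x * (u ^ (a + 1))⁻¹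
            = u * (u ^ a * x * (u ^ a)⁻¹) * u⁻¹ := by group
        rw [this]
        exact hstep _ (ih x hx)
    have hmain : ∀ g, ∃ x ∈ K, ∃ a : ℕ, g = x * u ^ a := by
      intro g
      induction g using Monoid.Coprod.induction_on with
      | inl m =>
        have hm : m = 1 ∨ m = ofAdd 1 := by revert m; decide
        rcases hm with rfl | rfl
        · exact ⟨1, one_mem K, 0, by simp⟩
        · exact ⟨s, hsK, 0, by rw [hs]; simp⟩
      | inr n =>
        refine ⟨1, one_mem K, (toAdd n).val, ?_⟩
        rw [hu, ← map_pow, hpow1, ZMod.natCast_zmod_val]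
        simp
      | mul x y hx hy =>
        obtain ⟨h1, hh1, a, rfl⟩ := hx
        obtain ⟨h2, hh2, b, rfl⟩ := hy
        refine ⟨h1 * (u ^ a * h2 * (u ^ a)⁻¹), mul_mem hh1 (hconj a h2 hh2), a + b, ?_⟩
        rw [pow_add]; group
    rw [hrange]
    refine le_antisymm hKker ?_
    intro g hg
    obtain ⟨x, hxK, a, rfl⟩ := hmain g
    have hπx : π x = 1 := hKker hxK
    have hga : ofAdd ((a : ZMod 4)) = 1 := by
      have := hg
      rw [MonoidHom.mem_ker, map_mul, hπx, one_mul, hπu] at this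
      exact this
    have : (a : ZMod 4) = 0 := by simpa using hga
    obtain ⟨m, rfl⟩ := (ZMod.natCast_eq_zero_iff a 4).mp this
    rw [pow_mul, hu4, one_pow, mul_one]
    exact hxK
end
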